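/- arXiv:2211.07288 — 7 statements merged into one kernel-verified Lean document; each statement's English description precedes it below -/
import Mathlib

section
/- For a bounded random variable Z on a probability space (Ω, F, P) and α ∈ (0,1], CVaR_α(Z) = max over ξ in the dual risk envelope U(α,P) of E[ξZ], where U(α,P) = {ξ : 0 ≤ αξ ≤ 1 a.s. and E[ξ] = 1}. -/
/-!
Weak duality is pointwise: if `0 ≤ α ξ ≤ 1` then `ξ (z - w) ≤ α⁻¹ (z - w)⁺`, and integrating
against `E[ξ] = 1` gives `E[ξ Z] ≤ w + α⁻¹ E[(Z - w)⁺]` for all `w`. For equality, let `w` be an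
upper `α`-quantile of `Z`, `P(Z > w) ≤ α ≤ P(Z ≥ w)`; it exists by an intermediate value argument
for the right-continuous distribution function of `Z`. Take `α ξ = 1` on `{Z > w}`, `α ξ = θ` on
`{Z = w}` with `θ P(Z = w) = α - P(Z > w)`, and `ξ = 0` elsewhere: then `E[ξ] = 1` and
`ξ (Z - w) = α⁻¹ (Z - w)⁺` pointwise.
-/

open MeasureTheory Set ProbabilityTheory

theorem mem_Icc_inv_of_mul_mem_Icc {α s : ℝ} (hα : 0 < α) (h : α * s ∈ Icc 0 1) :
    s ∈ Icc 0 α⁻¹ :=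
  ⟨nonneg_of_mul_nonneg_right h.1 hα, by rw [← one_div, le_div_iff₀' hα]; exact h.2⟩

theorem mul_le_inv_mul_max_zero {α s : ℝ} (hα : 0 < α) (hs : α * s ∈ Icc 0 1) (x : ℝ) :
    s * x ≤ α⁻¹ * max x 0 := by
  obtain ⟨hs₀, hs₁⟩ := mem_Icc_inv_of_mul_mem_Icc hα hs
  calc s * x ≤ s * max x 0 := mul_le_mul_of_nonneg_left (le_max_left _ _) hs₀
    _ ≤ α⁻¹ * max x 0 := mul_le_mul_of_nonneg_right hs₁ (le_max_right _ _)

theorem isGreatest_csInf_of_forall_le {R V : Set ℝ} (hle : ∀ r ∈ R, ∀ v ∈ V, r ≤ v) {x : ℝ}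
    (hxR : x ∈ R) (hxV : x ∈ V) : IsGreatest R (sInf V) := by
  rw [(show IsLeast V x from ⟨hxV, hle x hxR⟩).csInf_eq]
  exact ⟨hxR, fun r hr => hle r hr x hxV⟩

theorem StieltjesFunction.exists_leftLim_le_le (f : StieltjesFunction ℝ) {a b y : ℝ}
    (ha : f a ≤ y) (hb : y ≤ f b) : ∃ w, Function.leftLim f w ≤ y ∧ y ≤ f w := by
  set T := {t | a ≤ t ∧ y ≤ f t}
  have hT : T.Nonempty := ⟨max a b, le_max_left a b, hb.trans (f.mono (le_max_right a b))⟩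
  have hTbdd : BddBelow T := ⟨a, fun t ht => ht.1⟩
  refine ⟨sInf T, ?_, ?_⟩
  · refine le_of_tendsto (f.mono.tendsto_leftLim _) ?_
    filter_upwards [self_mem_nhdsWithin] with t (ht : t < sInf T)
    by_cases hat : a ≤ t
    · exact (not_le.mp fun h => (csInf_le hTbdd ⟨hat, h⟩).not_gt ht).le
    · exact (f.mono (not_le.mp hat).le).trans ha
  · refine ge_of_tendsto ((f.right_continuous _).mono Ioi_subset_Ici_self) ?_
    filter_upwards [self_mem_nhdsWithin] with t (ht : sInf T < t)
    obtain ⟨s, hs, hst⟩ := exists_lt_of_csInf_lt hT ht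
    exact hs.2.trans (f.mono hst.le)

section CVaR

variable {Ω : Type*} [MeasurableSpace Ω] {μ : Measure Ω} {Z ξ : Ω → ℝ} {α : ℝ}

noncomputable def cvarObjective (μ : Measure Ω) (Z : Ω → ℝ) (α w : ℝ) : ℝ :=
  w + α⁻¹ * ∫ ω, max (Z ω - w) 0 ∂μ

theorem integrable_mul_of_ae_mul_mem_Icc (hZ : Integrable Z μ) (hα : 0 < α)
    (hξm : AEStronglyMeasurable ξ μ) (hξ : ∀ᵐ ω ∂μ, α * ξ ω ∈ Icc 0 1) :
    Integrable (fun ω => ξ ω * Z ω) μ := by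
  refine hZ.bdd_mul hξm (c := α⁻¹) ?_
  filter_upwards [hξ] with ω hω
  obtain ⟨h₀, h₁⟩ := mem_Icc_inv_of_mul_mem_Icc hα hω
  rwa [Real.norm_of_nonneg h₀]

section FiniteMeasure

variable [IsFiniteMeasure μ]

theorem cvarObjective_sub_integral_mul (hZ : Integrable Z μ)
    (hξZ : Integrable (fun ω => ξ ω * Z ω) μ) (hξ : ∫ ω, ξ ω ∂μ = 1) (w : ℝ) :
    cvarObjective μ Z α w - ∫ ω, ξ ω * Z ω ∂μ =
      ∫ ω, (α⁻¹ * max (Z ω - w) 0 - ξ ω * (Z ω - w)) ∂μ := by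
  have hξint := integrable_of_integral_eq_one hξ
  simp only [mul_sub]
  rw [integral_sub, integral_sub hξZ (hξint.mul_const w), integral_const_mul, integral_mul_const,
    hξ, cvarObjective]
  · ring
  · exact ((hZ.sub (integrable_const w)).pos_part).const_mul _
  · exact hξZ.sub (hξint.mul_const w)

theorem integral_mul_le_cvarObjective (hZ : Integrable Z μ) (hα : 0 < α)
    (hξm : AEStronglyMeasurable ξ μ) (hξ : ∀ᵐ ω ∂μ, α * ξ ω ∈ Icc 0 1)
    (hξ1 : ∫ ω, ξ ω ∂μ = 1) (w : ℝ) :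
    ∫ ω, ξ ω * Z ω ∂μ ≤ cvarObjective μ Z α w := by
  rw [← sub_nonneg, cvarObjective_sub_integral_mul hZ
    (integrable_mul_of_ae_mul_mem_Icc hZ hα hξm hξ) hξ1]
  refine integral_nonneg_of_ae ?_
  filter_upwards [hξ] with ω hω
  exact sub_nonneg.mpr (mul_le_inv_mul_max_zero hα hω _)

theorem integral_mul_eq_cvarObjective (hZ : Integrable Z μ)
    (hξZ : Integrable (fun ω => ξ ω * Z ω) μ) (hξ1 : ∫ ω, ξ ω ∂μ = 1) {w : ℝ}
    (hslack : ∀ᵐ ω ∂μ, ξ ω * (Z ω - w) = α⁻¹ * max (Z ω - w) 0) :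
    ∫ ω, ξ ω * Z ω ∂μ = cvarObjective μ Z α w := by
  rw [eq_comm, ← sub_eq_zero, cvarObjective_sub_integral_mul hZ hξZ hξ1]
  refine integral_eq_zero_of_ae ?_
  filter_upwards [hslack] with ω hω
  simp [hω]

theorem exists_optimal_density (hZ : Measurable Z) (hα : 0 < α) {w : ℝ}
    (hp : μ.real {ω | w < Z ω} ≤ α) (hpq : α ≤ μ.real {ω | w ≤ Z ω}) :
    ∃ ξ : Ω → ℝ, Measurable ξ ∧ (∀ ω, α * ξ ω ∈ Icc 0 1) ∧ ∫ ω, ξ ω ∂μ = 1 ∧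
      ∀ ω, ξ ω * (Z ω - w) = α⁻¹ * max (Z ω - w) 0 := by
  set A := {ω | w < Z ω}
  set B := {ω | Z ω = w}
  have hA : MeasurableSet A := hZ measurableSet_Ioi
  have hB : MeasurableSet B := hZ (measurableSet_singleton w)
  have hAB : μ.real {ω | w ≤ Z ω} = μ.real A + μ.real B := by
    rw [← measureReal_union _ hB]
    · congr 1
      ext ω
      simp only [A, B, mem_ofPred_eq, mem_union, le_iff_lt_or_eq, eq_comm]
    · exact disjoint_left.mpr fun ω (h : w < Z ω) (h' : Z ω = w) => h.ne' h'
  -- If `μ.real B = 0` then `θ = 0` (division by zero), and `μ.real A = α` by `hp` and `hpq`.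
  set θ := (α - μ.real A) / μ.real B
  have hθ₀ : 0 ≤ θ := div_nonneg (by linarith) measureReal_nonneg
  have hθ₁ : θ ≤ 1 := div_le_one_of_le₀ (by linarith) measureReal_nonneg
  have hθB : θ * μ.real B = α - μ.real A := by
    rcases eq_or_ne (μ.real B) 0 with h | h
    · simp only [h, mul_zero]; linarith
    · exact div_mul_cancel₀ _ h
  set ξ := fun ω => α⁻¹ * (A.indicator 1 ω + θ * B.indicator 1 ω)
  have hαξ : ∀ ω, α * ξ ω = A.indicator 1 ω + θ * B.indicator 1 ω := fun ω => by
    simp only [ξ, ← mul_assoc, mul_inv_cancel₀ hα.ne', one_mul]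
  refine ⟨ξ, ?_, fun ω => ?_, ?_, fun ω => ?_⟩
  · exact ((measurable_const.indicator hA).add
      ((measurable_const.indicator hB).const_mul θ)).const_mul α⁻¹
  · rw [hαξ]
    rcases lt_trichotomy (Z ω) w with h | h | h
    · simp [A, B, h.not_gt, h.ne]
    · simp [A, B, h, hθ₀, hθ₁]
    · simp [A, B, h, h.ne']
  · rw [integral_const_mul, integral_add, integral_const_mul, integral_indicator_one hA,
      integral_indicator_one hB, hθB, add_sub_cancel, inv_mul_cancel₀ hα.ne']
    · exact (integrable_const 1).indicator hA
    · exact ((integrable_const 1).indicator hB).const_mul θ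
  · rcases lt_trichotomy (Z ω) w with h | h | h
    · simp [ξ, A, B, h.not_gt, h.ne, (sub_neg.mpr h).le]
    · simp [h]
    · simp [ξ, A, B, h, h.ne', (sub_pos.mpr h).le]

end FiniteMeasure

section ProbabilityMeasure

variable [IsProbabilityMeasure μ]

theorem measureReal_lt_eq_one_sub_cdf (hZ : AEMeasurable Z μ) (t : ℝ) :
    μ.real {ω | t < Z ω} = 1 - cdf (μ.map Z) t := by
  have := Measure.isProbabilityMeasure_map hZ
  have h := (cdf (μ.map Z)).measure_Ioi (tendsto_cdf_atTop _) t
  rw [measure_cdf] at h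
  rw [show {ω | t < Z ω} = Z ⁻¹' Ioi t from rfl,
    ← map_measureReal_apply_of_aemeasurable hZ measurableSet_Ioi, measureReal_def, h,
    ENNReal.toReal_ofReal (sub_nonneg.mpr (cdf_le_one _ _))]

theorem measureReal_le_eq_one_sub_leftLim_cdf (hZ : AEMeasurable Z μ) (t : ℝ) :
    μ.real {ω | t ≤ Z ω} = 1 - Function.leftLim (cdf (μ.map Z)) t := by
  have := Measure.isProbabilityMeasure_map hZ
  have h := (cdf (μ.map Z)).measure_Ici (tendsto_cdf_atTop _) t
  rw [measure_cdf] at h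
  rw [show {ω | t ≤ Z ω} = Z ⁻¹' Ici t from rfl,
    ← map_measureReal_apply_of_aemeasurable hZ measurableSet_Ici, measureReal_def, h,
    ENNReal.toReal_ofReal (sub_nonneg.mpr (((monotone_cdf _).leftLim_le le_rfl).trans
      (cdf_le_one _ _)))]

theorem exists_quantile (hZ : AEMeasurable Z μ) {a b : ℝ}
    (ha : α ≤ μ.real {ω | a < Z ω}) (hb : μ.real {ω | b < Z ω} ≤ α) :
    ∃ w, μ.real {ω | w < Z ω} ≤ α ∧ α ≤ μ.real {ω | w ≤ Z ω} := by
  simp only [measureReal_lt_eq_one_sub_cdf hZ, measureReal_le_eq_one_sub_leftLim_cdf hZ]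
    at ha hb ⊢
  obtain ⟨w, hleft, hright⟩ :=
    (cdf (μ.map Z)).exists_leftLim_le_le (a := a) (b := b) (y := 1 - α) (by linarith) (by linarith)
  exact ⟨w, by linarith, by linarith⟩

end ProbabilityMeasure

end CVaR

/-- Dual representation of CVaR: for a bounded random variable `Z` and `α ∈ (0,1]`,
`CVaR_α(Z) = max { E[ξ Z] : 0 ≤ α ξ ≤ 1 a.s., E[ξ] = 1 }`, where
`CVaR_α(Z) = min_w { w + α⁻¹ E[(Z - w)⁺] }`. The maximum is attained. -/
theorem cvar_dual_representation {Ω : Type*} [MeasurableSpace Ω] (μ : Measure Ω)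
    [IsProbabilityMeasure μ] (Z : Ω → ℝ) (hZmeas : Measurable Z)
    (C : ℝ) (hZbdd : ∀ ω, |Z ω| ≤ C)
    (α : ℝ) (hα : α ∈ Set.Ioc (0 : ℝ) 1) :
    IsGreatest
      {r : ℝ | ∃ ξ : Ω → ℝ, Measurable ξ ∧
        (∀ᵐ ω ∂μ, 0 ≤ α * ξ ω ∧ α * ξ ω ≤ 1) ∧
        (∫ ω, ξ ω ∂μ) = 1 ∧ r = ∫ ω, ξ ω * Z ω ∂μ}
      (sInf {v : ℝ | ∃ w : ℝ, v = w + α⁻¹ * ∫ ω, max (Z ω - w) 0 ∂μ}) := by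
  obtain ⟨hα0, hα1⟩ := hα
  have hZint : Integrable Z μ :=
    .of_bound hZmeas.aestronglyMeasurable C (ae_of_all _ hZbdd)
  have hlow : α ≤ μ.real {ω | -C - 1 < Z ω} := by
    have hall : {ω | -C - 1 < Z ω} = univ :=
      eq_univ_of_forall fun ω => show -C - 1 < Z ω by linarith [neg_abs_le (Z ω), hZbdd ω]
    rwa [hall, probReal_univ]
  have hhigh : μ.real {ω | C < Z ω} ≤ α := by
    have hnone : {ω | C < Z ω} = ∅ :=
      eq_empty_of_forall_notMem fun ω (h : C < Z ω) => by linarith [le_abs_self (Z ω), hZbdd ω]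
    rw [hnone, measureReal_empty]
    exact hα0.le
  obtain ⟨w, hp, hpq⟩ := exists_quantile hZmeas.aemeasurable hlow hhigh
  obtain ⟨ξ, hξm, hξ, hξ1, hslack⟩ := exists_optimal_density hZmeas hα0 hp hpq
  have hξZ := integrable_mul_of_ae_mul_mem_Icc hZint hα0 hξm.aestronglyMeasurable (ae_of_all _ hξ)
  refine isGreatest_csInf_of_forall_le ?_ ⟨ξ, hξm, ae_of_all _ hξ, hξ1, rfl⟩
    ⟨w, integral_mul_eq_cvarObjective hZint hξZ hξ1 (ae_of_all _ hslack)⟩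
  rintro r ⟨ξ', hξ'm, hξ', hξ'1, rfl⟩ v ⟨w', rfl⟩
  exact integral_mul_le_cvarObjective hZint hα0 hξ'm.aestronglyMeasurable hξ' hξ'1 w'
end

section
/- Let V : X × [0,1] → ℝ where X is finite, with V(x,·) nondecreasing, continuous, and concave for each x, and let p be a probability distribution on X. Define F(y) = max over b ∈ B(y) of Σ_x V(x, y·b(x))·p(x), where B(y) = {b ∈ ℝ^X : Σ_x p(x)b(x) = 1, 0 ≤ y·b(x) ≤ 1 for all x}. Then F is nondecreasing, continuous, and concave on [0,1]. -/
/-!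
Substituting `z = y • b` turns `F y` into the value `optimalValue p V y` of maximizing the concave
objective `∑ x, V x (z x) * p x` over `z ∈ [0,1]^X` under the linear constraint `p ⬝ᵥ z = y`.
Such a value function is concave, because convex combinations of feasible points are feasible
for the combined constraint. It is largest at `y = 1`, where `z = 1` is feasible, so concavity
makes it monotone. A concave function on `[0,1]` is continuous inside; at `1` it is squeezed
between its chord from `0` and its value at `1`, and at `0` the bound `z x ≤ y / p x` squeezes it
between `F 0` and a continuous function of `y` that equals `F 0` at `y = 0`.
-/

open Set

theorem ConcaveOn.concaveOn_sSup_image_inter_preimage {E : Type*} [AddCommGroup E]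
    [Module ℝ E] {K : Set E} {f : E → ℝ} (hf : ConcaveOn ℝ K f) (L : E →ₗ[ℝ] ℝ) {I : Set ℝ}
    (hI : Convex ℝ I) (hne : ∀ y ∈ I, (K ∩ L ⁻¹' {y}).Nonempty)
    (hbdd : ∀ y ∈ I, BddAbove (f '' (K ∩ L ⁻¹' {y}))) :
    ConcaveOn ℝ I fun y ↦ sSup (f '' (K ∩ L ⁻¹' {y})) := by
  refine ⟨hI, fun y₁ hy₁ y₂ hy₂ a b ha hb hab ↦ ?_⟩
  show a * sSup _ + b * sSup _ ≤ sSup _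
  rw [← smul_eq_mul, ← smul_eq_mul, ← Real.sSup_smul_of_nonneg ha, ← Real.sSup_smul_of_nonneg hb,
    ← csSup_add ((hne y₁ hy₁).image f).smul_set ((hbdd y₁ hy₁).smul_of_nonneg ha)
      ((hne y₂ hy₂).image f).smul_set ((hbdd y₂ hy₂).smul_of_nonneg hb)]
  refine csSup_le (((hne y₁ hy₁).image f).smul_set.add ((hne y₂ hy₂).image f).smul_set) ?_
  rintro _ ⟨_, ⟨_, ⟨z₁, ⟨hz₁, rfl⟩, rfl⟩, rfl⟩, _, ⟨_, ⟨z₂, ⟨hz₂, rfl⟩, rfl⟩, rfl⟩, rfl⟩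
  refine (hf.2 hz₁ hz₂ ha hb hab).trans (le_csSup (hbdd _ (hI hy₁ hy₂ ha hb hab)) ?_)
  exact ⟨a • z₁ + b • z₂, ⟨hf.1 hz₁ hz₂ ha hb hab, by simp⟩, rfl⟩

theorem ConcaveOn.monotoneOn_of_le_right {f : ℝ → ℝ} {l u : ℝ} (hf : ConcaveOn ℝ (Icc l u) f)
    (hu : ∀ y ∈ Icc l u, f y ≤ f u) : MonotoneOn f (Icc l u) := fun y₁ hy₁ y₂ hy₂ hle ↦ by
  simpa [min_eq_left (hu y₁ hy₁)] using
    hf.min_le_of_mem_Icc hy₁ (right_mem_Icc.2 (hy₁.1.trans hy₁.2)) ⟨hle, hy₂.2⟩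

theorem ConcaveOn.chord_le_of_mem_Icc {f : ℝ → ℝ} {l u y : ℝ} (hf : ConcaveOn ℝ (Icc l u) f)
    (hlu : l < u) (hy : y ∈ Icc l u) : f l + (y - l) / (u - l) * (f u - f l) ≤ f y := by
  have hul : 0 < u - l := sub_pos.2 hlu
  set t := (y - l) / (u - l)
  have ht : 0 ≤ t := div_nonneg (sub_nonneg.2 hy.1) hul.le
  have ht' : 0 ≤ 1 - t := sub_nonneg.2 ((div_le_one hul).2 (by linarith [hy.2]))
  have hpt : (1 - t) • l + t • u = y := by
    simp only [t, smul_eq_mul]; field_simp; ring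
  have := hf.2 (left_mem_Icc.2 hlu.le) (right_mem_Icc.2 hlu.le) ht' ht (by ring)
  rw [hpt, smul_eq_mul, smul_eq_mul] at this
  linarith

theorem ConcaveOn.continuousWithinAt_right_of_monotoneOn {f : ℝ → ℝ} {l u : ℝ}
    (hf : ConcaveOn ℝ (Icc l u) f) (hmono : MonotoneOn f (Icc l u)) (hlu : l < u) :
    ContinuousWithinAt f (Icc l u) u := by
  have hchord_u : f l + (u - l) / (u - l) * (f u - f l) = f u := by
    rw [div_self (sub_pos.2 hlu).ne']; ring
  have hchord : Filter.Tendsto (fun y ↦ f l + (y - l) / (u - l) * (f u - f l))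
      (nhdsWithin u (Icc l u)) (nhds (f u)) := by
    have := (show Continuous fun y ↦ f l + (y - l) / (u - l) * (f u - f l) by fun_prop)
      |>.continuousWithinAt (s := Icc l u) (x := u)
    rwa [ContinuousWithinAt, hchord_u] at this
  refine tendsto_of_tendsto_of_tendsto_of_le_of_le' hchord tendsto_const_nhds ?_ ?_
  · filter_upwards [self_mem_nhdsWithin] with y hy using hf.chord_le_of_mem_Icc hlu hy
  · filter_upwards [self_mem_nhdsWithin] with y hy using hmono hy (right_mem_Icc.2 hlu.le) hy.2

theorem min_one_div_mem_Icc {X : Type*} {p : X → ℝ} (hp0 : ∀ x, 0 ≤ p x) {y : ℝ} (hy : 0 ≤ y) :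
    (fun x ↦ min 1 (y / p x)) ∈ Icc 0 1 :=
  ⟨fun x ↦ le_min zero_le_one (div_nonneg hy (hp0 x)), fun _ ↦ min_le_left _ _⟩

section Allocation

variable {X : Type*} [Fintype X] (p : X → ℝ) (V : X → ℝ → ℝ)

def expectedUtility (z : X → ℝ) : ℝ := ∑ x, V x (z x) * p x

def allocations (y : ℝ) : Set (X → ℝ) := Icc 0 1 ∩ {z | p ⬝ᵥ z = y}

noncomputable def optimalValue (y : ℝ) : ℝ := sSup (expectedUtility p V '' allocations p y)

variable {p V}

theorem expectedUtility_eq_of_mem_allocations_zero (hp0 : ∀ x, 0 ≤ p x) {z : X → ℝ}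
    (hz : z ∈ allocations p 0) : expectedUtility p V z = expectedUtility p V 0 := by
  have hpz := (Finset.sum_eq_zero_iff_of_nonneg fun x _ ↦ mul_nonneg (hp0 x) (hz.1.1 x)).1 hz.2
  refine Finset.sum_congr rfl fun x hx ↦ ?_
  rcases mul_eq_zero.1 (hpz x hx) with hpx | hzx
  · simp [hpx]
  · simp [hzx]

theorem setOf_eq_image_allocations (hp0 : ∀ x, 0 ≤ p x) (hp1 : ∑ x, p x = 1) {y : ℝ}
    (hy : y ∈ Icc 0 1) :
    {r : ℝ | ∃ b : X → ℝ, (∑ x, p x * b x) = 1 ∧ (∀ x, 0 ≤ y * b x ∧ y * b x ≤ 1) ∧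
      r = ∑ x, V x (y * b x) * p x} = expectedUtility p V '' allocations p y := by
  ext r
  constructor
  · rintro ⟨b, hb, hyb, rfl⟩
    refine ⟨y • b, ⟨⟨fun x ↦ (hyb x).1, fun x ↦ (hyb x).2⟩, ?_⟩, rfl⟩
    show p ⬝ᵥ (y • b) = y
    rw [dotProduct_smul, show p ⬝ᵥ b = 1 from hb, smul_eq_mul, mul_one]
  · rintro ⟨z, hz, rfl⟩
    rcases hy.1.eq_or_lt with rfl | hy0
    · refine ⟨1, by simpa using hp1, fun _ ↦ by simp, ?_⟩
      rw [expectedUtility_eq_of_mem_allocations_zero hp0 hz]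
      simp [expectedUtility]
    · have hyz : ∀ x, y * (y⁻¹ • z) x = z x := fun x ↦ mul_inv_cancel_left₀ hy0.ne' (z x)
      refine ⟨y⁻¹ • z, ?_, fun x ↦ hyz x ▸ ⟨hz.1.1 x, hz.1.2 x⟩, by simp only [hyz]; rfl⟩
      rw [← dotProduct, dotProduct_smul, hz.2, smul_eq_mul, inv_mul_cancel₀ hy0.ne']

theorem concaveOn_expectedUtility (hp0 : ∀ x, 0 ≤ p x)
    (hconc : ∀ x, ConcaveOn ℝ (Icc 0 1) (V x)) : ConcaveOn ℝ (Icc 0 1) (expectedUtility p V) := by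
  refine ⟨convex_Icc 0 1, fun z₁ hz₁ z₂ hz₂ a b ha hb hab ↦ ?_⟩
  simp only [expectedUtility, smul_eq_mul, Finset.mul_sum, ← Finset.sum_add_distrib]
  refine Finset.sum_le_sum fun x _ ↦ ?_
  have := mul_le_mul_of_nonneg_right
    ((hconc x).2 ⟨hz₁.1 x, hz₁.2 x⟩ ⟨hz₂.1 x, hz₂.2 x⟩ ha hb hab) (hp0 x)
  simp only [smul_eq_mul, Pi.add_apply, Pi.smul_apply] at this ⊢
  linarith

theorem monotoneOn_expectedUtility (hp0 : ∀ x, 0 ≤ p x)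
    (hmono : ∀ x, MonotoneOn (V x) (Icc 0 1)) : MonotoneOn (expectedUtility p V) (Icc 0 1) :=
  fun _ hz₁ _ hz₂ hle ↦ Finset.sum_le_sum fun x _ ↦ mul_le_mul_of_nonneg_right
    (hmono x ⟨hz₁.1 x, hz₁.2 x⟩ ⟨hz₂.1 x, hz₂.2 x⟩ (hle x)) (hp0 x)

theorem continuousOn_expectedUtility (hcont : ∀ x, ContinuousOn (V x) (Icc 0 1)) :
    ContinuousOn (expectedUtility p V) (Icc 0 1) :=
  continuousOn_finsetSum _ fun x _ ↦ ((hcont x).comp (continuous_apply x).continuousOn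
    fun _ hz ↦ ⟨hz.1 x, hz.2 x⟩).mul continuousOn_const

theorem const_mem_allocations (hp1 : ∑ x, p x = 1) {y : ℝ} (hy : y ∈ Icc 0 1) :
    (fun _ ↦ y) ∈ allocations p y :=
  ⟨⟨fun _ ↦ hy.1, fun _ ↦ hy.2⟩, by simp [dotProduct, ← Finset.sum_mul, hp1]⟩

theorem expectedUtility_le_one (hp0 : ∀ x, 0 ≤ p x) (hmono : ∀ x, MonotoneOn (V x) (Icc 0 1))
    {y : ℝ} {z : X → ℝ} (hz : z ∈ allocations p y) :
    expectedUtility p V z ≤ expectedUtility p V 1 :=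
  monotoneOn_expectedUtility hp0 hmono hz.1 ⟨zero_le_one, le_rfl⟩ hz.1.2

theorem bddAbove_image_allocations (hp0 : ∀ x, 0 ≤ p x)
    (hmono : ∀ x, MonotoneOn (V x) (Icc 0 1)) (y : ℝ) :
    BddAbove (expectedUtility p V '' allocations p y) :=
  ⟨_, forall_mem_image.2 fun _ hz ↦ expectedUtility_le_one hp0 hmono hz⟩

theorem optimalValue_le_optimalValue_one (hp0 : ∀ x, 0 ≤ p x) (hp1 : ∑ x, p x = 1)
    (hmono : ∀ x, MonotoneOn (V x) (Icc 0 1)) {y : ℝ} (hy : y ∈ Icc 0 1) :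
    optimalValue p V y ≤ optimalValue p V 1 := by
  refine csSup_le (Set.Nonempty.image _ ⟨_, const_mem_allocations hp1 hy⟩) ?_
  rintro _ ⟨z, hz, rfl⟩
  exact (expectedUtility_le_one hp0 hmono hz).trans <| le_csSup (bddAbove_image_allocations hp0
    hmono 1) ⟨_, const_mem_allocations hp1 (right_mem_Icc.2 zero_le_one), rfl⟩

theorem concaveOn_optimalValue (hp0 : ∀ x, 0 ≤ p x) (hp1 : ∑ x, p x = 1)
    (hmono : ∀ x, MonotoneOn (V x) (Icc 0 1)) (hconc : ∀ x, ConcaveOn ℝ (Icc 0 1) (V x)) :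
    ConcaveOn ℝ (Icc 0 1) (optimalValue p V) :=
  (concaveOn_expectedUtility hp0 hconc).concaveOn_sSup_image_inter_preimage
    (dotProductBilin ℝ ℝ p) (convex_Icc 0 1) (fun _ hy ↦ ⟨_, const_mem_allocations hp1 hy⟩)
    fun y _ ↦ bddAbove_image_allocations hp0 hmono y

theorem monotoneOn_optimalValue (hp0 : ∀ x, 0 ≤ p x) (hp1 : ∑ x, p x = 1)
    (hmono : ∀ x, MonotoneOn (V x) (Icc 0 1)) (hconc : ∀ x, ConcaveOn ℝ (Icc 0 1) (V x)) :
    MonotoneOn (optimalValue p V) (Icc 0 1) :=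
  (concaveOn_optimalValue hp0 hp1 hmono hconc).monotoneOn_of_le_right
    fun _ hy ↦ optimalValue_le_optimalValue_one hp0 hp1 hmono hy

theorem le_div_of_mem_allocations (hp0 : ∀ x, 0 ≤ p x) {y : ℝ} {z : X → ℝ}
    (hz : z ∈ allocations p y) {x : X} (hpx : 0 < p x) : z x ≤ y / p x := by
  rw [le_div_iff₀ hpx, ← hz.2, mul_comm]
  exact Finset.single_le_sum (fun x _ ↦ mul_nonneg (hp0 x) (hz.1.1 x)) (Finset.mem_univ x)

theorem expectedUtility_le_of_mem_allocations (hp0 : ∀ x, 0 ≤ p x)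
    (hmono : ∀ x, MonotoneOn (V x) (Icc 0 1)) {y : ℝ} (hy : 0 ≤ y) {z : X → ℝ}
    (hz : z ∈ allocations p y) :
    expectedUtility p V z ≤ expectedUtility p V fun x ↦ min 1 (y / p x) := by
  refine Finset.sum_le_sum fun x _ ↦ ?_
  rcases (hp0 x).eq_or_lt with hpx | hpx
  · simp [← hpx]
  have hcap := min_one_div_mem_Icc hp0 hy
  exact mul_le_mul_of_nonneg_right (hmono x ⟨hz.1.1 x, hz.1.2 x⟩ ⟨hcap.1 x, hcap.2 x⟩
    (le_min (hz.1.2 x) (le_div_of_mem_allocations hp0 hz hpx))) hpx.le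

theorem continuousWithinAt_optimalValue_zero (hp0 : ∀ x, 0 ≤ p x) (hp1 : ∑ x, p x = 1)
    (hmono : ∀ x, MonotoneOn (V x) (Icc 0 1)) (hcont : ∀ x, ContinuousOn (V x) (Icc 0 1))
    (hconc : ∀ x, ConcaveOn ℝ (Icc 0 1) (V x)) :
    ContinuousWithinAt (optimalValue p V) (Icc 0 1) 0 := by
  set G : ℝ → ℝ := fun y ↦ expectedUtility p V fun x ↦ min 1 (y / p x)
  have hG : ∀ y ∈ Icc (0 : ℝ) 1, optimalValue p V y ≤ G y := fun y hy ↦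
    csSup_le (Set.Nonempty.image _ ⟨_, const_mem_allocations hp1 hy⟩)
      (forall_mem_image.2 fun _ hz ↦ expectedUtility_le_of_mem_allocations hp0 hmono hy.1 hz)
  have hG0 : G 0 = optimalValue p V 0 := by
    refine le_antisymm (le_csSup (bddAbove_image_allocations hp0 hmono 0) ⟨0, ?_, ?_⟩)
      (hG 0 (left_mem_Icc.2 zero_le_one))
    · exact ⟨⟨le_rfl, zero_le_one⟩, by simp⟩
    · simp only [G, zero_div, min_eq_right zero_le_one]; rfl
  have hGcont : ContinuousWithinAt G (Icc 0 1) 0 :=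
    ((continuousOn_expectedUtility hcont).comp (by fun_prop : Continuous fun (y : ℝ) (x : X) ↦
      min 1 (y / p x)).continuousOn fun _ hy ↦ min_one_div_mem_Icc hp0 hy.1) _
      (left_mem_Icc.2 zero_le_one)
  rw [ContinuousWithinAt, hG0] at hGcont
  refine tendsto_of_tendsto_of_tendsto_of_le_of_le' tendsto_const_nhds hGcont ?_ ?_
  · filter_upwards [self_mem_nhdsWithin] with y hy
    exact monotoneOn_optimalValue hp0 hp1 hmono hconc (left_mem_Icc.2 zero_le_one) hy hy.1
  · filter_upwards [self_mem_nhdsWithin] with y hy using hG y hy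

theorem continuousOn_optimalValue (hp0 : ∀ x, 0 ≤ p x) (hp1 : ∑ x, p x = 1)
    (hmono : ∀ x, MonotoneOn (V x) (Icc 0 1)) (hcont : ∀ x, ContinuousOn (V x) (Icc 0 1))
    (hconc : ∀ x, ConcaveOn ℝ (Icc 0 1) (V x)) :
    ContinuousOn (optimalValue p V) (Icc 0 1) := by
  have hconc' := concaveOn_optimalValue hp0 hp1 hmono hconc
  refine hconc'.continuousOn_Icc zero_lt_one ?_ ?_
  · exact (continuousWithinAt_Icc_iff_Ici zero_lt_one).1
      (continuousWithinAt_optimalValue_zero hp0 hp1 hmono hcont hconc)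
  · exact (continuousWithinAt_Icc_iff_Iic zero_lt_one).1 <|
      hconc'.continuousWithinAt_right_of_monotoneOn
        (monotoneOn_optimalValue hp0 hp1 hmono hconc) zero_lt_one

end Allocation

theorem F_monotone_continuous_concave_general {X : Type*} [Fintype X]
    (p : X → ℝ) (hp0 : ∀ x, 0 ≤ p x) (hp1 : (∑ x, p x) = 1)
    (V : X → ℝ → ℝ)
    (hmono : ∀ x, MonotoneOn (V x) (Set.Icc 0 1))
    (hcont : ∀ x, ContinuousOn (V x) (Set.Icc 0 1))
    (hconc : ∀ x, ConcaveOn ℝ (Set.Icc 0 1) (V x))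
    (F : ℝ → ℝ)
    (hF : ∀ y ∈ Set.Icc (0 : ℝ) 1, F y = sSup {r : ℝ | ∃ b : X → ℝ,
      (∑ x, p x * b x) = 1 ∧ (∀ x, 0 ≤ y * b x ∧ y * b x ≤ 1) ∧
      r = ∑ x, V x (y * b x) * p x}) :
    MonotoneOn F (Set.Icc 0 1) ∧ ContinuousOn F (Set.Icc 0 1) ∧
      ConcaveOn ℝ (Set.Icc 0 1) F := by
  have hFeq : EqOn (optimalValue p V) F (Icc 0 1) := fun y hy ↦ by
    rw [hF y hy, setOf_eq_image_allocations hp0 hp1 hy, optimalValue]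
  exact ⟨(monotoneOn_optimalValue hp0 hp1 hmono hconc).congr hFeq,
    (continuousOn_optimalValue hp0 hp1 hmono hcont hconc).congr hFeq.symm,
    (concaveOn_optimalValue hp0 hp1 hmono hconc).congr hFeq⟩

/-- For `V(x,·)` nondecreasing, continuous, concave on `[0,1]` for each `x` in a finite
set, and `p` a probability vector, the function
`F(y) = max_{b ∈ B(y)} Σ_x V(x, y b(x)) p(x)`, where
`B(y) = {b : Σ p(x) b(x) = 1, 0 ≤ y b(x) ≤ 1}`, is nondecreasing, continuous, and
concave on `[0,1]`. -/
theorem F_monotone_continuous_concave {X : Type*} [Fintype X] [Nonempty X]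
    (p : X → ℝ) (hp0 : ∀ x, 0 ≤ p x) (hp1 : (∑ x, p x) = 1)
    (V : X → ℝ → ℝ)
    (hmono : ∀ x, MonotoneOn (V x) (Set.Icc 0 1))
    (hcont : ∀ x, ContinuousOn (V x) (Set.Icc 0 1))
    (hconc : ∀ x, ConcaveOn ℝ (Set.Icc 0 1) (V x))
    (F : ℝ → ℝ)
    (hF : ∀ y ∈ Set.Icc (0 : ℝ) 1, F y = sSup {r : ℝ | ∃ b : X → ℝ,
      (∑ x, p x * b x) = 1 ∧ (∀ x, 0 ≤ y * b x ∧ y * b x ≤ 1) ∧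
      r = ∑ x, V x (y * b x) * p x}) :
    MonotoneOn F (Set.Icc 0 1) ∧ ContinuousOn F (Set.Icc 0 1) ∧
      ConcaveOn ℝ (Set.Icc 0 1) F :=
  F_monotone_continuous_concave_general p hp0 hp1 V hmono hcont hconc F hF
end

section
/- If V(x,·) is piecewise linear, concave, continuous, and nondecreasing on [0,1] for each x in the finite set X, then the function F(y) = max_{b∈B(y)} Σ_x V(x, y b(x)) p(x) is also piecewise linear on [0,1]. -/
/-!
Fix a slope `μ`. By concavity, the maximisers of `t ↦ V(x, t) - μ t` on `[0, 1]` form an interval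
`[lo_x(μ), hi_x(μ)]` between two breakpoints of `V(x, ·)`. For `y` between `∑ p(x) lo_x(μ)`
and `∑ p(x) hi_x(μ)` one can choose `t(x) = y b(x)` inside these intervals with
`∑ p(x) t(x) = y`, so the Lagrangian bound `F(y) ≤ μ y + ∑ p(x) max_t (V(x, t) - μ t)` is
attained and `F` is affine there.
As `μ` decreases through the finitely many slopes of the `V(x, ·)`, each of these intervals starts
where the previous one ends, running from `0` to `1`; their endpoints form the partition.
-/

open Set

/-- `f : [0,1] → ℝ` is piecewise linear: there is a finite partition
`0 = u₀ < u₁ < … < u_n = 1` such that `f` is affine on each `[u_{i-1}, u_i]`. -/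
def IsPiecewiseLinearOn01 (f : ℝ → ℝ) : Prop :=
  ∃ n : ℕ, 0 < n ∧ ∃ u : ℕ → ℝ, u 0 = 0 ∧ u n = 1 ∧ (∀ i < n, u i < u (i + 1)) ∧
    ∀ i < n, ∃ c d : ℝ, ∀ t ∈ Set.Icc (u i) (u (i + 1)), f t = c * t + d

lemma isPiecewiseLinearOn01_of_finset {f : ℝ → ℝ} (E : Finset ℝ) (h0 : (0 : ℝ) ∈ E)
    (h1 : (1 : ℝ) ∈ E) (hE : ∀ v ∈ E, v ∈ Icc (0 : ℝ) 1)
    (haff : ∀ a ∈ E, ∀ b ∈ E, a < b → (∀ v ∈ E, v ∉ Ioo a b) →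
      ∃ c d : ℝ, ∀ t ∈ Icc a b, f t = c * t + d) :
    IsPiecewiseLinearOn01 f := by
  set k := E.card
  have hk : 1 < k := Finset.one_lt_card.mpr ⟨0, h0, 1, h1, zero_ne_one⟩
  set e := E.orderEmbOfFin rfl
  let u : ℕ → ℝ := fun i => if h : i < k then e ⟨i, h⟩ else 1
  have hu : ∀ i (h : i < k), u i = e ⟨i, h⟩ := fun i h => dif_pos h
  have hu_mem : ∀ i (h : i < k), u i ∈ E := fun i h => hu i h ▸ E.orderEmbOfFin_mem rfl _
  have hu_lt : ∀ i < k - 1, u i < u (i + 1) := fun i hi => by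
    rw [hu i (by omega), hu (i + 1) (by omega)]
    exact e.strictMono (Fin.mk_lt_mk.mpr (Nat.lt_succ_self i))
  refine ⟨k - 1, by omega, u, ?_, ?_, hu_lt, fun i hi => ?_⟩
  · rw [hu 0 (by omega), Finset.orderEmbOfFin_zero rfl (by omega)]
    exact le_antisymm (E.min'_le _ h0) (hE _ (E.min'_mem _)).1
  · rw [hu _ (by omega), Finset.orderEmbOfFin_last rfl (by omega)]
    exact le_antisymm (hE _ (E.max'_mem _)).2 (E.le_max' _ h1)
  refine haff _ (hu_mem i (by omega)) _ (hu_mem (i + 1) (by omega)) (hu_lt i hi) ?_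
  rintro v hv ⟨hlo, hhi⟩
  obtain ⟨j, rfl⟩ : v ∈ Set.range e := by rwa [Finset.range_orderEmbOfFin]
  rw [hu i (by omega), e.lt_iff_lt, Fin.lt_def] at hlo
  rw [hu (i + 1) (by omega), e.lt_iff_lt, Fin.lt_def] at hhi
  simp only at hlo hhi
  omega

lemma isPiecewiseLinearOn01_of_cover {ι : Type*} {f : ℝ → ℝ} (s : Finset ι) (A B : ι → ℝ)
    (hA : ∀ i ∈ s, 0 ≤ A i) (hB : ∀ i ∈ s, B i ≤ 1) (hAB : ∀ i ∈ s, A i ≤ B i)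
    (hcover : ∀ y ∈ Icc (0 : ℝ) 1, ∃ i ∈ s, y ∈ Icc (A i) (B i))
    (haff : ∀ i ∈ s, ∃ c d : ℝ, ∀ t ∈ Icc (A i) (B i), f t = c * t + d) :
    IsPiecewiseLinearOn01 f := by
  set E := insert 0 (insert 1 (s.image A ∪ s.image B))
  have hAE : ∀ i ∈ s, A i ∈ E := fun i hi => by simp [E, Finset.mem_image_of_mem A hi]
  have hBE : ∀ i ∈ s, B i ∈ E := fun i hi => by simp [E, Finset.mem_image_of_mem B hi]
  have hE : ∀ v ∈ E, v ∈ Icc (0 : ℝ) 1 := by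
    simp only [E, Finset.mem_insert, Finset.mem_union, Finset.mem_image]
    rintro v (rfl | rfl | ⟨i, hi, rfl⟩ | ⟨i, hi, rfl⟩)
    exacts [⟨le_rfl, zero_le_one⟩, ⟨zero_le_one, le_rfl⟩, ⟨hA i hi, (hAB i hi).trans (hB i hi)⟩,
      ⟨(hA i hi).trans (hAB i hi), hB i hi⟩]
  refine isPiecewiseLinearOn01_of_finset E (by simp [E]) (by simp [E]) hE
    fun a ha b hb hab hgap => ?_
  obtain ⟨i, hi, hAi, hBi⟩ := hcover ((a + b) / 2)
    ⟨by linarith [(hE a ha).1], by linarith [(hE b hb).2]⟩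
  have hAa : A i ≤ a := not_lt.mp fun h => hgap (A i) (hAE i hi) ⟨h, by linarith⟩
  have hBb : b ≤ B i := not_lt.mp fun h => hgap (B i) (hBE i hi) ⟨by linarith, h⟩
  obtain ⟨c, d, hcd⟩ := haff i hi
  exact ⟨c, d, fun t ht => hcd t ⟨hAa.trans ht.1, ht.2.trans hBb⟩⟩

lemma Finset.exists_mem_Icc_of_chain {α β : Type*} [LinearOrder α] [LinearOrder β]
    {Λ : Finset α} (hΛ : Λ.Nonempty) {L R : α → β} {y : β}
    (htop : L (Λ.max' hΛ) ≤ y) (hbot : y ≤ R (Λ.min' hΛ))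
    (hchain : ∀ μ ∈ Λ, ∀ ν ∈ Λ, μ < ν → (∀ κ ∈ Λ, κ ∉ Set.Ioo μ ν) → L μ ≤ R ν) :
    ∃ μ ∈ Λ, L μ ≤ y ∧ y ≤ R μ := by
  have hT : (Λ.filter fun μ => L μ ≤ y).Nonempty := ⟨_, mem_filter.2 ⟨max'_mem _ _, htop⟩⟩
  set ν := (Λ.filter fun μ => L μ ≤ y).min' hT
  obtain ⟨hνΛ, hLν⟩ := mem_filter.1 (min'_mem _ hT)
  refine ⟨ν, hνΛ, hLν, ?_⟩
  by_contra! hRν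
  have hbelow : (Λ.filter (· < ν)).Nonempty := by
    refine ⟨Λ.min' hΛ, mem_filter.2 ⟨min'_mem _ _, (min'_le _ _ hνΛ).lt_of_ne fun h => ?_⟩⟩
    exact (h ▸ hbot).not_gt hRν
  set μ := (Λ.filter (· < ν)).max' hbelow
  obtain ⟨hμΛ, hμν⟩ := mem_filter.1 (max'_mem _ hbelow)
  have hgap : ∀ κ ∈ Λ, κ ∉ Set.Ioo μ ν := fun κ hκ h =>
    (le_max' _ κ (mem_filter.2 ⟨hκ, h.2⟩)).not_gt h.1
  have hLμ : L μ ≤ y := (hchain μ hμΛ ν hνΛ hμν hgap).trans hRν.le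
  exact (min'_le _ μ (mem_filter.2 ⟨hμΛ, hLμ⟩)).not_gt hμν

lemma lt_card_filter_range_iff {n i : ℕ} {q : ℕ → Prop} [DecidablePred q]
    (hq : ∀ i j, i ≤ j → j < n → q j → q i) (hi : i < n) :
    i < ((Finset.range n).filter q).card ↔ q i := by
  constructor
  · intro h
    by_contra hqi
    have hsub : (Finset.range n).filter q ⊆ Finset.range i := fun j hj => by
      rw [Finset.mem_filter, Finset.mem_range] at hj
      exact Finset.mem_range.2 (not_le.mp fun hij => hqi (hq i j hij hj.1 hj.2))
    exact (Finset.card_le_card hsub).not_gt (by simpa using h)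
  · intro hqi
    have hsub : Finset.range (i + 1) ⊆ (Finset.range n).filter q := fun j hj => by
      rw [Finset.mem_range] at hj
      exact Finset.mem_filter.2 ⟨Finset.mem_range.2 (by omega), hq j i (by omega) hi hqi⟩
    simpa using Finset.card_le_card hsub

structure PLPartition (f : ℝ → ℝ) where
  n : ℕ
  u : ℕ → ℝ
  slope : ℕ → ℝ
  intercept : ℕ → ℝ
  u_zero : u 0 = 0
  u_n : u n = 1
  u_lt_succ : ∀ i < n, u i < u (i + 1)
  eq_on_piece : ∀ i < n, ∀ t ∈ Icc (u i) (u (i + 1)), f t = slope i * t + intercept i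

lemma IsPiecewiseLinearOn01.nonempty_partition {f : ℝ → ℝ} (hf : IsPiecewiseLinearOn01 f) :
    Nonempty (PLPartition f) := by
  obtain ⟨n, -, u, hu0, hun, hlt, hpiece⟩ := hf
  choose! c d hcd using hpiece
  exact ⟨⟨n, u, c, d, hu0, hun, hlt, hcd⟩⟩

namespace PLPartition

variable {f : ℝ → ℝ} (P : PLPartition f)

lemma strictMonoOn_u : StrictMonoOn P.u (Iic P.n) :=
  strictMonoOn_Iic_of_lt_succ fun i hi => P.u_lt_succ i hi

lemma u_lt {i j : ℕ} (hij : i < j) (hj : j ≤ P.n) : P.u i < P.u j :=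
  P.strictMonoOn_u (show i ≤ P.n by omega) hj hij

lemma u_le {i j : ℕ} (hij : i ≤ j) (hj : j ≤ P.n) : P.u i ≤ P.u j :=
  P.strictMonoOn_u.monotoneOn (show i ≤ P.n by omega) hj hij

lemma u_mem_Icc {i : ℕ} (hi : i ≤ P.n) : P.u i ∈ Icc (0 : ℝ) 1 :=
  ⟨P.u_zero ▸ P.u_le (Nat.zero_le i) hi, P.u_n ▸ P.u_le hi le_rfl⟩

lemma n_pos : 0 < P.n :=
  Nat.pos_of_ne_zero fun h => by simpa [h, P.u_zero] using P.u_n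

lemma exists_piece {t : ℝ} (ht : t ∈ Icc (0 : ℝ) 1) : ∃ i < P.n, t ∈ Icc (P.u i) (P.u (i + 1)) := by
  have hn := P.n_pos
  have hex : ∃ i, t ≤ P.u (i + 1) := ⟨P.n - 1, by rw [Nat.sub_add_cancel hn, P.u_n]; exact ht.2⟩
  refine ⟨Nat.find hex, ?_, ?_, Nat.find_spec hex⟩
  · exact (Nat.find_le (by rw [Nat.sub_add_cancel hn, P.u_n]; exact ht.2)).trans_lt (by omega)
  · rcases h : Nat.find hex with _ | i
    · rw [P.u_zero]; exact ht.1
    · exact (not_le.mp (Nat.find_min hex (h ▸ Nat.lt_succ_self i))).le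

lemma sub_eq_slope_mul {i : ℕ} (hi : i < P.n) {s t : ℝ} (hs : s ∈ Icc (P.u i) (P.u (i + 1)))
    (ht : t ∈ Icc (P.u i) (P.u (i + 1))) : f t - f s = P.slope i * (t - s) := by
  rw [P.eq_on_piece i hi t ht, P.eq_on_piece i hi s hs]; ring

lemma slope_antitone (hf : ConcaveOn ℝ (Icc 0 1) f) {i j : ℕ} (hij : i ≤ j) (hj : j < P.n) :
    P.slope j ≤ P.slope i := by
  have hslope : ∀ k < P.n, _root_.slope f (P.u k) (P.u (k + 1)) = P.slope k := fun k hk => by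
    have hlt := P.u_lt_succ k hk
    rw [slope_def_field, P.sub_eq_slope_mul hk ⟨le_rfl, hlt.le⟩ ⟨hlt.le, le_rfl⟩,
      mul_div_cancel_right₀ _ (sub_ne_zero.2 hlt.ne')]
  have h1 : _root_.slope f (P.u i) (P.u (j + 1)) ≤ _root_.slope f (P.u i) (P.u (i + 1)) :=
    hf.slope_anti (P.u_mem_Icc (by omega))
      ⟨P.u_mem_Icc (by omega), (P.u_lt (Nat.lt_succ_self i) (by omega)).ne'⟩
      ⟨P.u_mem_Icc hj, (P.u_lt (by omega) hj).ne'⟩ (P.u_le (by omega) hj)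
  have h2 : _root_.slope f (P.u (j + 1)) (P.u j) ≤ _root_.slope f (P.u (j + 1)) (P.u i) :=
    hf.slope_anti (P.u_mem_Icc hj) ⟨P.u_mem_Icc (by omega), (P.u_lt (by omega) hj).ne⟩
      ⟨P.u_mem_Icc (by omega), (P.u_lt (Nat.lt_succ_self j) hj).ne⟩ (P.u_le hij (by omega))
  rw [← hslope i (by omega), ← hslope j hj, slope_comm f (P.u j)]
  exact h2.trans (slope_comm f (P.u i) _ ▸ h1)

lemma isMaxOn_sub_mul {μ : ℝ} {k : ℕ} (hk : k ≤ P.n) (hleft : ∀ i < k, μ ≤ P.slope i)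
    (hright : ∀ i < P.n, k ≤ i → P.slope i ≤ μ) :
    IsMaxOn (fun t => f t - μ * t) (Icc 0 1) (P.u k) := by
  set g := fun t => f t - μ * t
  have hstep : ∀ i < P.n, ∀ {s t}, s ∈ Icc (P.u i) (P.u (i + 1)) → t ∈ Icc (P.u i) (P.u (i + 1)) →
      g t - g s = (P.slope i - μ) * (t - s) := fun i hi s t hs ht => by
    simp only [g]; linear_combination P.sub_eq_slope_mul hi hs ht
  have hpiece : ∀ i < P.n, ∀ t ∈ Icc (P.u i) (P.u (i + 1)),
      g t ≤ max (g (P.u i)) (g (P.u (i + 1))) := by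
    intro i hi t ht
    have hl := hstep i hi ⟨le_rfl, (P.u_lt_succ i hi).le⟩ ht
    have hr := hstep i hi ⟨(P.u_lt_succ i hi).le, le_rfl⟩ ht
    rcases le_total μ (P.slope i) with h | h
    · exact le_max_of_le_right (by nlinarith [ht.2])
    · exact le_max_of_le_left (by nlinarith [ht.1])
  have hup : MonotoneOn (fun i => g (P.u i)) (Iic k) :=
    monotoneOn_of_le_add_one ordConnected_Iic fun i _ _ hi1 => by
      rw [mem_Iic] at hi1
      have hi : i < P.n := by omega
      have := hstep i hi ⟨le_rfl, (P.u_lt_succ i hi).le⟩ ⟨(P.u_lt_succ i hi).le, le_rfl⟩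
      nlinarith [hleft i (by omega), P.u_lt_succ i hi]
  have hdown : AntitoneOn (fun i => g (P.u i)) (Icc k P.n) :=
    antitoneOn_of_add_one_le ordConnected_Icc fun i _ hi hi1 => by
      have hi' : i < P.n := by rw [mem_Icc] at hi1; omega
      have := hstep i hi' ⟨le_rfl, (P.u_lt_succ i hi').le⟩ ⟨(P.u_lt_succ i hi').le, le_rfl⟩
      nlinarith [hright i hi' hi.1, P.u_lt_succ i hi']
  have hbreak : ∀ i ≤ P.n, g (P.u i) ≤ g (P.u k) := fun i hi => by
    rcases le_total i k with h | h
    · exact hup h (le_refl k) h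
    · exact hdown ⟨le_rfl, hk⟩ ⟨h, hi⟩ h
  intro t ht
  obtain ⟨i, hi, hti⟩ := P.exists_piece ht
  exact (hpiece i hi t hti).trans (max_le (hbreak i hi.le) (hbreak (i + 1) hi))

-- `lowPt μ` and `highPt μ` are the least and the greatest maximiser of `t ↦ f t - μ * t`
-- on `[0, 1]`.
noncomputable def lowIdx (μ : ℝ) : ℕ := ((Finset.range P.n).filter fun i => μ < P.slope i).card

noncomputable def highIdx (μ : ℝ) : ℕ := ((Finset.range P.n).filter fun i => μ ≤ P.slope i).card

noncomputable def lowPt (μ : ℝ) : ℝ := P.u (P.lowIdx μ)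

noncomputable def highPt (μ : ℝ) : ℝ := P.u (P.highIdx μ)

lemma lowIdx_le_highIdx (μ : ℝ) : P.lowIdx μ ≤ P.highIdx μ :=
  Finset.card_le_card (Finset.monotone_filter_right _ fun _ _ => le_of_lt)

lemma highIdx_le (μ : ℝ) : P.highIdx μ ≤ P.n :=
  (Finset.card_filter_le _ _).trans (Finset.card_range _).le

lemma lowPt_le_highPt (μ : ℝ) : P.lowPt μ ≤ P.highPt μ :=
  P.u_le (P.lowIdx_le_highIdx μ) (P.highIdx_le μ)

lemma lowPt_mem_Icc (μ : ℝ) : P.lowPt μ ∈ Icc (0 : ℝ) 1 :=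
  P.u_mem_Icc ((P.lowIdx_le_highIdx μ).trans (P.highIdx_le μ))

lemma highPt_mem_Icc (μ : ℝ) : P.highPt μ ∈ Icc (0 : ℝ) 1 :=
  P.u_mem_Icc (P.highIdx_le μ)

section Concave

variable (hf : ConcaveOn ℝ (Icc 0 1) f)
include hf

lemma lt_lowIdx_iff {μ : ℝ} {i : ℕ} (hi : i < P.n) : i < P.lowIdx μ ↔ μ < P.slope i :=
  lt_card_filter_range_iff (fun _ _ hij hj h => h.trans_le (P.slope_antitone hf hij hj)) hi

lemma lt_highIdx_iff {μ : ℝ} {i : ℕ} (hi : i < P.n) : i < P.highIdx μ ↔ μ ≤ P.slope i :=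
  lt_card_filter_range_iff (fun _ _ hij hj h => h.trans (P.slope_antitone hf hij hj)) hi

lemma isMaxOn_u_of_lowIdx_le {μ : ℝ} {k : ℕ} (hlow : P.lowIdx μ ≤ k) (hhigh : k ≤ P.highIdx μ) :
    IsMaxOn (fun t => f t - μ * t) (Icc 0 1) (P.u k) :=
  P.isMaxOn_sub_mul (hhigh.trans (P.highIdx_le μ))
    (fun i hi => (P.lt_highIdx_iff hf (by linarith [P.highIdx_le μ])).1 (by omega))
    (fun i hi hki => not_lt.1 fun h => by have := (P.lt_lowIdx_iff hf hi).2 h; omega)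

lemma isMaxOn_highPt (μ : ℝ) : IsMaxOn (fun t => f t - μ * t) (Icc 0 1) (P.highPt μ) :=
  P.isMaxOn_u_of_lowIdx_le hf (P.lowIdx_le_highIdx μ) le_rfl

lemma sub_mul_eq_of_mem_contact {μ t : ℝ} (ht : t ∈ Icc (P.lowPt μ) (P.highPt μ)) :
    f t - μ * t = f (P.highPt μ) - μ * P.highPt μ := by
  have hg : ConcaveOn ℝ (Icc 0 1) (fun t => f t - μ * t) :=
    hf.sub ((LinearMap.mul ℝ ℝ μ).convexOn (convex_Icc 0 1))
  have hmax := P.isMaxOn_highPt hf μ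
  have hlow : f (P.lowPt μ) - μ * P.lowPt μ = f (P.highPt μ) - μ * P.highPt μ :=
    le_antisymm (hmax (P.lowPt_mem_Icc μ))
      (P.isMaxOn_u_of_lowIdx_le hf le_rfl (P.lowIdx_le_highIdx μ) (P.highPt_mem_Icc μ))
  have hmin := hg.min_le_of_mem_Icc (P.lowPt_mem_Icc μ) (P.highPt_mem_Icc μ) ht
  rw [hlow, min_self] at hmin
  exact le_antisymm
    (hmax ⟨(P.lowPt_mem_Icc μ).1.trans ht.1, ht.2.trans (P.highPt_mem_Icc μ).2⟩) hmin

end Concave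

lemma lowPt_eq_zero {μ : ℝ} (h : ∀ i < P.n, P.slope i ≤ μ) : P.lowPt μ = 0 := by
  rw [lowPt, lowIdx, Finset.card_eq_zero.2, P.u_zero]
  exact Finset.filter_eq_empty_iff.2 fun i hi => not_lt.2 (h i (Finset.mem_range.1 hi))

lemma highPt_eq_one {μ : ℝ} (h : ∀ i < P.n, μ ≤ P.slope i) : P.highPt μ = 1 := by
  rw [highPt, highIdx, Finset.filter_true_of_mem fun i hi => h i (Finset.mem_range.1 hi),
    Finset.card_range, P.u_n]

lemma lowPt_eq_highPt {μ ν : ℝ} (hμν : μ < ν) (h : ∀ i < P.n, P.slope i ∉ Ioo μ ν) :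
    P.lowPt μ = P.highPt ν := by
  have hfilter : ((Finset.range P.n).filter fun i => μ < P.slope i) =
      (Finset.range P.n).filter fun i => ν ≤ P.slope i := Finset.filter_congr fun i hi =>
    ⟨fun hμ => not_lt.1 fun hν => h i (Finset.mem_range.1 hi) ⟨hμ, hν⟩, hμν.trans_le⟩
  rw [lowPt, highPt, lowIdx, highIdx, hfilter]

end PLPartition

section Objective

variable {X : Type*} [Fintype X] (p : X → ℝ) (V : X → ℝ → ℝ)

def objectiveValues (y : ℝ) : Set ℝ :=
  {r : ℝ | ∃ b : X → ℝ, (∑ x, p x * b x) = 1 ∧ (∀ x, 0 ≤ y * b x ∧ y * b x ≤ 1) ∧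
    r = ∑ x, V x (y * b x) * p x}

lemma objectiveValues_eq_image (hp0 : ∀ x, 0 ≤ p x) (hp1 : ∑ x, p x = 1) (y : ℝ) :
    objectiveValues p V y = (fun t : X → ℝ => ∑ x, V x (t x) * p x) ''
      {t | (∀ x, t x ∈ Icc 0 1) ∧ ∑ x, p x * t x = y} := by
  ext r
  constructor
  · rintro ⟨b, hb1, hb, rfl⟩
    refine ⟨fun x => y * b x, ⟨hb, ?_⟩, rfl⟩
    simp_rw [mul_left_comm _ y, ← Finset.mul_sum, hb1, mul_one]
  · rintro ⟨t, ⟨ht, hty⟩, rfl⟩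
    rcases eq_or_ne y 0 with rfl | hy
    · have hpt : ∀ x, p x * t x = 0 := fun x =>
        (Finset.sum_eq_zero_iff_of_nonneg fun x _ => mul_nonneg (hp0 x) (ht x).1).1 hty x
          (Finset.mem_univ x)
      refine ⟨1, by simpa using hp1, by simp, Finset.sum_congr rfl fun x _ => ?_⟩
      rcases mul_eq_zero.1 (hpt x) with h | h <;> simp [h]
    · refine ⟨fun x => t x / y, ?_, fun x => ?_, ?_⟩
      · simp_rw [mul_div_assoc', ← Finset.sum_div, hty, div_self hy]
      · rw [mul_div_cancel₀ _ hy]; exact ht x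
      · simp_rw [mul_div_cancel₀ _ hy]

lemma isGreatest_image_of_supporting {μ : ℝ} {γ lo hi : X → ℝ} (hp0 : ∀ x, 0 ≤ p x)
    (hle : ∀ x, ∀ t ∈ Icc (0 : ℝ) 1, V x t ≤ μ * t + γ x)
    (heq : ∀ x, ∀ t ∈ Icc (lo x) (hi x), V x t = μ * t + γ x)
    (hlo : ∀ x, 0 ≤ lo x) (hhi : ∀ x, hi x ≤ 1) (hlohi : ∀ x, lo x ≤ hi x) {y : ℝ}
    (hy : y ∈ Icc (∑ x, p x * lo x) (∑ x, p x * hi x)) :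
    IsGreatest ((fun t : X → ℝ => ∑ x, V x (t x) * p x) ''
      {t | (∀ x, t x ∈ Icc 0 1) ∧ ∑ x, p x * t x = y}) (μ * y + ∑ x, γ x * p x) := by
  have hval : ∀ t : X → ℝ, ∑ x, (μ * t x + γ x) * p x = μ * ∑ x, p x * t x + ∑ x, γ x * p x :=
    fun t => by
      rw [Finset.mul_sum, ← Finset.sum_add_distrib]
      exact Finset.sum_congr rfl fun x _ => by ring
  refine ⟨?_, ?_⟩
  · let ℓ : (X → ℝ) →ₗ[ℝ] ℝ := Fintype.linearCombination ℝ p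
    have hℓ : ∀ t, ℓ t = ∑ x, p x * t x := fun t => by
      simp only [ℓ, Fintype.linearCombination_apply, smul_eq_mul, mul_comm]
    have hseg : y ∈ ℓ.toAffineMap '' segment ℝ lo hi := by
      rw [image_segment, segment_eq_Icc] <;> simp only [LinearMap.coe_toAffineMap, hℓ]
      exacts [hy, Finset.sum_le_sum fun x _ => mul_le_mul_of_nonneg_left (hlohi x) (hp0 x)]
    obtain ⟨t, ht, hty⟩ := hseg
    have htx : ∀ x, t x ∈ Icc (lo x) (hi x) := fun x => by
      rw [← segment_eq_Icc (hlohi x)]; exact Pi.segment_subset lo hi ht x (Set.mem_univ x)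
    rw [LinearMap.coe_toAffineMap, hℓ] at hty
    refine ⟨t, ⟨fun x => ⟨(hlo x).trans (htx x).1, (htx x).2.trans (hhi x)⟩, hty⟩, ?_⟩
    simp only [← hty, ← hval]
    exact Finset.sum_congr rfl fun x _ => by rw [heq x (t x) (htx x)]
  · rintro _ ⟨t, ⟨ht, rfl⟩, rfl⟩
    rw [← hval]
    exact Finset.sum_le_sum fun x _ => mul_le_mul_of_nonneg_right (hle x (t x) (ht x)) (hp0 x)

end Objective

lemma sSup_objectiveValues_eq {X : Type*} [Fintype X] (p : X → ℝ) (V : X → ℝ → ℝ)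
    (hp0 : ∀ x, 0 ≤ p x) (hp1 : ∑ x, p x = 1) (hconc : ∀ x, ConcaveOn ℝ (Icc 0 1) (V x))
    (P : ∀ x, PLPartition (V x)) (μ : ℝ) {y : ℝ}
    (hy : y ∈ Icc (∑ x, p x * (P x).lowPt μ) (∑ x, p x * (P x).highPt μ)) :
    sSup (objectiveValues p V y) =
      μ * y + ∑ x, (V x ((P x).highPt μ) - μ * (P x).highPt μ) * p x := by
  rw [objectiveValues_eq_image p V hp0 hp1]
  refine (isGreatest_image_of_supporting p V hp0 (fun x t ht => ?_) (fun x t ht => ?_)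
    (fun x => ((P x).lowPt_mem_Icc μ).1) (fun x => ((P x).highPt_mem_Icc μ).2)
    (fun x => (P x).lowPt_le_highPt μ) hy).csSup_eq
  · have hmax := isMaxOn_iff.1 ((P x).isMaxOn_highPt (hconc x) μ) t ht
    linarith
  · linarith [(P x).sub_mul_eq_of_mem_contact (hconc x) ht]

section Slopes

variable {X : Type*} [Fintype X] {V : X → ℝ → ℝ} (P : ∀ x, PLPartition (V x))

noncomputable def slopes : Finset ℝ :=
  Finset.univ.biUnion fun x => (Finset.range (P x).n).image (P x).slope

lemma slope_mem_slopes (x : X) {i : ℕ} (hi : i < (P x).n) : (P x).slope i ∈ slopes P :=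
  Finset.mem_biUnion.2 ⟨x, Finset.mem_univ x, Finset.mem_image_of_mem _ (Finset.mem_range.2 hi)⟩

lemma exists_mem_slopes_mem_contact [Nonempty X] (p : X → ℝ) (hp1 : ∑ x, p x = 1) {y : ℝ}
    (hy : y ∈ Icc (0 : ℝ) 1) :
    ∃ μ ∈ slopes P, y ∈ Icc (∑ x, p x * (P x).lowPt μ) (∑ x, p x * (P x).highPt μ) := by
  have hne : (slopes P).Nonempty :=
    ⟨_, slope_mem_slopes P (Classical.arbitrary X) (P _).n_pos⟩
  refine Finset.exists_mem_Icc_of_chain hne ?_ ?_ fun μ _ ν _ hμν hgap => le_of_eq ?_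
  · refine le_of_eq_of_le (Finset.sum_eq_zero fun x _ => ?_) hy.1
    rw [(P x).lowPt_eq_zero fun i hi => (slopes P).le_max' _ (slope_mem_slopes P x hi), mul_zero]
  · refine hy.2.trans_eq ((Finset.sum_congr rfl fun x _ => ?_).trans hp1).symm
    rw [(P x).highPt_eq_one fun i hi => (slopes P).min'_le _ (slope_mem_slopes P x hi), mul_one]
  · exact Finset.sum_congr rfl fun x _ => by
      rw [(P x).lowPt_eq_highPt hμν fun i hi => hgap _ (slope_mem_slopes P x hi)]

end Slopes

theorem F_piecewise_linear_general {X : Type*} [Fintype X]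
    (p : X → ℝ) (hp0 : ∀ x, 0 ≤ p x) (hp1 : (∑ x, p x) = 1)
    (V : X → ℝ → ℝ)
    (hconc : ∀ x, ConcaveOn ℝ (Set.Icc 0 1) (V x))
    (hPL : ∀ x, IsPiecewiseLinearOn01 (V x))
    (F : ℝ → ℝ)
    (hF : ∀ y ∈ Set.Icc (0 : ℝ) 1, F y = sSup {r : ℝ | ∃ b : X → ℝ,
      (∑ x, p x * b x) = 1 ∧ (∀ x, 0 ≤ y * b x ∧ y * b x ≤ 1) ∧
      r = ∑ x, V x (y * b x) * p x}) :
    IsPiecewiseLinearOn01 F := by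
  have P : ∀ x, PLPartition (V x) := fun x => (hPL x).nonempty_partition.some
  have : Nonempty X := by
    by_contra h
    simp [not_nonempty_iff.1 h] at hp1
  have hlow : ∀ μ, 0 ≤ ∑ x, p x * (P x).lowPt μ := fun μ =>
    Finset.sum_nonneg fun x _ => mul_nonneg (hp0 x) ((P x).lowPt_mem_Icc μ).1
  have hhigh : ∀ μ, ∑ x, p x * (P x).highPt μ ≤ 1 := fun μ => hp1 ▸ Finset.sum_le_sum fun x _ =>
    mul_le_of_le_one_right (hp0 x) ((P x).highPt_mem_Icc μ).2
  refine isPiecewiseLinearOn01_of_cover (slopes P) _ _ (fun μ _ => hlow μ) (fun μ _ => hhigh μ)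
    (fun μ _ => Finset.sum_le_sum fun x _ =>
      mul_le_mul_of_nonneg_left ((P x).lowPt_le_highPt μ) (hp0 x))
    (fun y hy => exists_mem_slopes_mem_contact P p hp1 hy) fun μ _ =>
      ⟨μ, _, fun y hy => (hF y ⟨(hlow μ).trans hy.1, hy.2.trans (hhigh μ)⟩).trans
        (sSup_objectiveValues_eq p V hp0 hp1 hconc P μ hy)⟩

/-- If each `V(x,·)` is piecewise linear, concave, continuous, nondecreasing on `[0,1]`,
then `F(y) = max_{b ∈ B(y)} Σ_x V(x, y b(x)) p(x)` is also piecewise linear. -/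
theorem F_piecewise_linear {X : Type*} [Fintype X] [Nonempty X]
    (p : X → ℝ) (hp0 : ∀ x, 0 ≤ p x) (hp1 : (∑ x, p x) = 1)
    (V : X → ℝ → ℝ)
    (hmono : ∀ x, MonotoneOn (V x) (Set.Icc 0 1))
    (hcont : ∀ x, ContinuousOn (V x) (Set.Icc 0 1))
    (hconc : ∀ x, ConcaveOn ℝ (Set.Icc 0 1) (V x))
    (hPL : ∀ x, IsPiecewiseLinearOn01 (V x))
    (F : ℝ → ℝ)
    (hF : ∀ y ∈ Set.Icc (0 : ℝ) 1, F y = sSup {r : ℝ | ∃ b : X → ℝ,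
      (∑ x, p x * b x) = 1 ∧ (∀ x, 0 ≤ y * b x ∧ y * b x ≤ 1) ∧
      r = ∑ x, V x (y * b x) * p x}) :
    IsPiecewiseLinearOn01 F :=
  F_piecewise_linear_general p hp0 hp1 V hconc hPL F hF
end

section
/- Let v(x,·) : [0, p(x)] → ℝ be nondecreasing, continuous, concave with v(x,0)=0 for each x in a finite set X, where p(x) > 0 and Σ_x p(x) = 1. Define F(y) = max over z ∈ Z(y) of Σ_x v(x, z(x)), where Z(y) = {z ∈ ℝ^X : Σ_x z(x) = y, 0 ≤ z(x) ≤ p(x)}. Then if z̃(y) is a maximizer for level y ∈ [0,1], the right derivative of F satisfies F'₊(y) = max over x ∈ X of d⁺ v(x, z̃(y,x)), the right derivative of v(x,·) at z̃(y,x). -/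
open Set Filter

lemma mt_secant_anti {f : ℝ → ℝ} {s : Set ℝ} (hf : ConcaveOn ℝ s f) {a x y : ℝ}
    (ha : a ∈ s) (hx : x ∈ s) (hy : y ∈ s) (hxa : x ≠ a) (hya : y ≠ a) (hxy : x ≤ y) :
    (f y - f a) / (y - a) ≤ (f x - f a) / (x - a) := by
  have h := hf.neg.secant_mono ha hx hy hxa hya hxy
  simp only [Pi.neg_apply] at h
  have e1 : (-f x - -f a) / (x - a) = -((f x - f a) / (x - a)) := by ring
  have e2 : (-f y - -f a) / (y - a) = -((f y - f a) / (y - a)) := by ring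
  rw [e1, e2] at h
  linarith

lemma mt_sum_upd1 {X : Type*} [Fintype X] (f g : X → ℝ) (x : X)
    (h : ∀ w, w ≠ x → g w = f w) : (∑ w, g w) = (∑ w, f w) - f x + g x := by
  classical
  have key : ∀ u : X → ℝ, (∑ w, u w) = (∑ w ∈ Finset.univ \ {x}, u w) + u x := by
    intro u
    rw [← Finset.sum_sdiff (Finset.subset_univ {x})]
    simp
  have hcong : (∑ w ∈ Finset.univ \ {x}, g w) = ∑ w ∈ Finset.univ \ {x}, f w := by
    apply Finset.sum_congr rfl
    intro w hw
    simp only [Finset.mem_sdiff, Finset.mem_singleton] at hw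
    exact h w hw.2
  rw [key g, key f, hcong]; ring

lemma mt_sum_upd2 {X : Type*} [Fintype X] (f g : X → ℝ) {x x' : X} (hxx' : x ≠ x')
    (h : ∀ w, w ≠ x → w ≠ x' → g w = f w) :
    (∑ w, g w) = (∑ w, f w) - f x - f x' + g x + g x' := by
  classical
  have key : ∀ u : X → ℝ, (∑ w, u w) = (∑ w ∈ Finset.univ \ {x, x'}, u w) + (u x + u x') := by
    intro u
    rw [← Finset.sum_sdiff (Finset.subset_univ {x, x'}), Finset.sum_pair hxx']
  have hcong : (∑ w ∈ Finset.univ \ ({x, x'} : Finset X), g w)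
      = ∑ w ∈ Finset.univ \ {x, x'}, f w := by
    apply Finset.sum_congr rfl
    intro w hw
    simp only [Finset.mem_sdiff, Finset.mem_insert, Finset.mem_singleton, not_or] at hw
    exact h w hw.2.1 hw.2.2
  rw [key g, key f, hcong]; ring

/-- Mass transfer problem `F(y) = max_{z ∈ Z(y)} Σ_x v(x, z(x))`,
`Z(y) = {z : Σ z(x) = y, 0 ≤ z(x) ≤ p(x)}`. If `z̃` is a maximizer for level `y`, then
`F'₊(y) = max_x d⁺v(x, z̃(x))` (with conventions `d⁺v(x, p(x)) = 0`, `F'₊(1) = 0`). -/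
theorem masstransfer_right_derivative {X : Type*} [Fintype X] [Nonempty X]
    (p : X → ℝ) (hp0 : ∀ x, 0 < p x) (hp1 : (∑ x, p x) = 1)
    (v : X → ℝ → ℝ)
    (hmono : ∀ x, MonotoneOn (v x) (Set.Icc 0 (p x)))
    (hcont : ∀ x, ContinuousOn (v x) (Set.Icc 0 (p x)))
    (hconc : ∀ x, ConcaveOn ℝ (Set.Icc 0 (p x)) (v x))
    (hv0 : ∀ x, v x 0 = 0)
    (F : ℝ → ℝ)
    (hF : ∀ y ∈ Set.Icc (0 : ℝ) 1, F y = sSup {r : ℝ | ∃ z : X → ℝ,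
      ((∑ x, z x) = y ∧ ∀ x, 0 ≤ z x ∧ z x ≤ p x) ∧ r = ∑ x, v x (z x)})
    (y : ℝ) (hy : y ∈ Set.Icc (0 : ℝ) 1)
    (z : X → ℝ) (hzfeas : (∑ x, z x) = y ∧ ∀ x, 0 ≤ z x ∧ z x ≤ p x)
    (hzopt : (∑ x, v x (z x)) = F y)
    (Fp : ℝ) (dp : X → ℝ)
    (hFp : if y < 1 then
        Tendsto (fun h : ℝ => (F (y + h) - F y) / h) (nhdsWithin 0 (Set.Ioi 0)) (nhds Fp)
      else Fp = 0)
    (hdp : ∀ x, if z x < p x then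
        Tendsto (fun h : ℝ => (v x (z x + h) - v x (z x)) / h)
          (nhdsWithin 0 (Set.Ioi 0)) (nhds (dp x))
      else dp x = 0) :
    Fp = Finset.univ.sup' Finset.univ_nonempty dp := by
  classical
  obtain ⟨hy0, hy1⟩ := hy
  obtain ⟨hzsum, hzb⟩ := hzfeas
  set M := Finset.univ.sup' Finset.univ_nonempty dp with hMdef
  have hdpM : ∀ x, dp x ≤ M := fun x => Finset.le_sup' dp (Finset.mem_univ x)
  obtain ⟨xm, -, hxm⟩ := Finset.exists_mem_eq_sup' Finset.univ_nonempty dp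
  have hbdd : ∀ w : ℝ, BddAbove {r : ℝ | ∃ z' : X → ℝ,
      ((∑ x, z' x) = w ∧ ∀ x, 0 ≤ z' x ∧ z' x ≤ p x) ∧ r = ∑ x, v x (z' x)} := by
    intro w
    refine ⟨∑ x, v x (p x), ?_⟩
    rintro r ⟨z', ⟨-, hb⟩, rfl⟩
    exact Finset.sum_le_sum fun x _ =>
      hmono x ⟨(hb x).1, (hb x).2⟩ ⟨(hp0 x).le, le_refl _⟩ (hb x).2
  have hle : ∀ w : ℝ, w ∈ Set.Icc (0:ℝ) 1 → ∀ z' : X → ℝ, (∑ x, z' x) = w →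
      (∀ x, 0 ≤ z' x ∧ z' x ≤ p x) → (∑ x, v x (z' x)) ≤ F w := by
    intro w hw z' hs hb
    rw [hF w hw]
    exact le_csSup (hbdd w) ⟨z', ⟨hs, hb⟩, rfl⟩
  by_cases hylt : y < 1
  swap
  · -- y = 1
    have hy1' : y = 1 := le_antisymm hy1 (not_lt.1 hylt)
    rw [if_neg hylt] at hFp
    have hall : ∀ x, z x = p x := by
      by_contra hc
      push_neg at hc
      obtain ⟨x0, hx0⟩ := hc
      have hlt : z x0 < p x0 := lt_of_le_of_ne (hzb x0).2 hx0
      have hsl : (∑ x, z x) < ∑ x, p x :=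
        Finset.sum_lt_sum (fun x _ => (hzb x).2) ⟨x0, Finset.mem_univ x0, hlt⟩
      rw [hzsum, hp1, hy1'] at hsl
      exact lt_irrefl 1 hsl
    have hdp0 : ∀ x, dp x = 0 := by
      intro x
      have hx := hdp x
      rw [if_neg (by rw [hall x]; exact lt_irrefl _)] at hx
      exact hx
    rw [hFp]
    refine le_antisymm ?_ (Finset.sup'_le _ _ fun x _ => (hdp0 x).le)
    obtain ⟨x⟩ := ‹Nonempty X›
    have := Finset.le_sup' dp (Finset.mem_univ x)
    rw [hdp0 x] at this
    exact this
  · rw [if_pos hylt] at hFp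
    have h1y : (0:ℝ) < 1 - y := by linarith
    -- monotonicity of F on the right of y
    have hmonF : ∀ h : ℝ, 0 < h → h < 1 - y → F y ≤ F (y + h) := by
      intro h h0 hh
      set c := h / (1 - y) with hc
      have hc0 : 0 < c := div_pos h0 h1y
      have hc1 : c ≤ 1 := by rw [hc, div_le_one h1y]; linarith
      set z' := fun w => z w + c * (p w - z w) with hz'
      have hbz' : ∀ w, 0 ≤ z' w ∧ z' w ≤ p w := by
        intro w
        have h1 := (hzb w).1
        have h2 := (hzb w).2
        constructor
        · have : 0 ≤ c * (p w - z w) := mul_nonneg hc0.le (by linarith)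
          simp only [hz']; linarith
        · have : c * (p w - z w) ≤ 1 * (p w - z w) :=
            mul_le_mul_of_nonneg_right hc1 (by linarith)
          simp only [hz']; linarith
      have hsz' : (∑ x, z' x) = y + h := by
        simp only [hz']
        rw [Finset.sum_add_distrib, ← Finset.mul_sum, Finset.sum_sub_distrib, hzsum, hp1]
        have hch : c * (1 - y) = h := div_mul_cancel₀ h (ne_of_gt h1y)
        linarith
      have hge : ∀ w, v w (z w) ≤ v w (z' w) := by
        intro w
        refine hmono w ⟨(hzb w).1, (hzb w).2⟩ ⟨(hbz' w).1, (hbz' w).2⟩ ?_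
        have : 0 ≤ c * (p w - z w) := mul_nonneg hc0.le (by linarith [(hzb w).2])
        simp only [hz']; linarith
      calc F y = ∑ x, v x (z x) := hzopt.symm
        _ ≤ ∑ x, v x (z' x) := Finset.sum_le_sum fun w _ => hge w
        _ ≤ F (y + h) := hle (y + h) ⟨by linarith, by linarith⟩ z' hsz' hbz'
    have hFp0 : 0 ≤ Fp := by
      refine ge_of_tendsto hFp ?_
      filter_upwards [Ioo_mem_nhdsGT h1y] with h hh
      exact div_nonneg (by linarith [hmonF h hh.1 hh.2]) hh.1.le
    -- Step A : dp x ≤ Fp for all x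
    have hA : ∀ x, dp x ≤ Fp := by
      intro x
      have hx := hdp x
      by_cases hzx : z x < p x
      · rw [if_pos hzx] at hx
        refine le_of_tendsto_of_tendsto hx hFp ?_
        filter_upwards [Ioo_mem_nhdsGT
          (lt_min h1y (sub_pos.2 hzx))] with h hh
        obtain ⟨h0, hlt⟩ := hh
        have hh1 : h < 1 - y := lt_of_lt_of_le hlt (min_le_left _ _)
        have hh2 : h < p x - z x := lt_of_lt_of_le hlt (min_le_right _ _)
        set z' := Function.update z x (z x + h) with hz'
        have hz'x : z' x = z x + h := Function.update_self x _ z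
        have hz'w : ∀ w, w ≠ x → z' w = z w := fun w hw => Function.update_of_ne hw _ z
        have hsz' : (∑ w, z' w) = y + h := by
          rw [mt_sum_upd1 z z' x hz'w, hzsum, hz'x]; ring
        have hbz' : ∀ w, 0 ≤ z' w ∧ z' w ≤ p w := by
          intro w
          by_cases hw : w = x
          · subst hw; rw [hz'x]
            exact ⟨by linarith [(hzb w).1], by linarith⟩
          · rw [hz'w w hw]; exact hzb w
        have hval : (∑ w, v w (z' w)) = (∑ w, v w (z w)) - v x (z x) + v x (z x + h) := by
          rw [mt_sum_upd1 (fun w => v w (z w)) (fun w => v w (z' w)) x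
            (fun w hw => by show v w (z' w) = v w (z w); rw [hz'w w hw]), hz'x]
        have hFyh : (∑ w, v w (z' w)) ≤ F (y + h) :=
          hle (y + h) ⟨by linarith, by linarith⟩ z' hsz' hbz'
        have hnum : v x (z x + h) - v x (z x) ≤ F (y + h) - F y := by
          rw [hval, hzopt] at hFyh; linarith
        exact div_le_div_of_nonneg_right hnum h0.le
      · rw [if_neg hzx] at hx
        rw [hx]; exact hFp0
    -- Key supergradient inequality
    have hkey : ∀ x, ∀ t, 0 ≤ t → t ≤ p x → v x t - v x (z x) ≤ M * (t - z x) := by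
      intro x t ht0 htp
      have hzmem : z x ∈ Set.Icc 0 (p x) := ⟨(hzb x).1, (hzb x).2⟩
      rcases lt_trichotomy t (z x) with hlt | heq | hgt
      · -- t < z x
        set s := (v x t - v x (z x)) / (t - z x) with hs
        have hgen : ∀ x', dp x' ≤ s := by
          intro x'
          have hx' := hdp x'
          by_cases hzx' : z x' < p x'
          · rw [if_pos hzx'] at hx'
            refine le_of_tendsto hx' ?_
            filter_upwards [Ioo_mem_nhdsGT
              (lt_min (sub_pos.2 hlt) (sub_pos.2 hzx'))] with ε hε
            obtain ⟨hε0, hεlt⟩ := hε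
            have he1 : ε < z x - t := lt_of_lt_of_le hεlt (min_le_left _ _)
            have he2 : ε < p x' - z x' := lt_of_lt_of_le hεlt (min_le_right _ _)
            by_cases hxx : x' = x
            · subst hxx
              have hsec := mt_secant_anti (hconc x') hzmem
                (x := t) (y := z x' + ε) ⟨ht0, htp⟩
                ⟨by linarith [(hzb x').1], by linarith⟩
                (ne_of_lt hlt) (by intro hcon; linarith) (by linarith)
              rw [add_sub_cancel_left] at hsec
              exact hsec
            · -- transfer ε from x to x'
              set z'' := Function.update (Function.update z x (z x - ε)) x' (z x' + ε) with hz''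
              have hz''x' : z'' x' = z x' + ε := Function.update_self x' _ _
              have hz''x : z'' x = z x - ε := by
                rw [hz'', Function.update_of_ne (Ne.symm hxx) _ _, Function.update_self]
              have hz''w : ∀ w, w ≠ x → w ≠ x' → z'' w = z w := by
                intro w hw hw'
                rw [hz'', Function.update_of_ne hw' _ _, Function.update_of_ne hw _ _]
              have hxx' : x ≠ x' := fun h => hxx h.symm
              have hsz'' : (∑ w, z'' w) = y := by
                rw [mt_sum_upd2 z z'' hxx' hz''w, hzsum, hz''x, hz''x']; ring
              have hbz'' : ∀ w, 0 ≤ z'' w ∧ z'' w ≤ p w := by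
                intro w
                by_cases hw : w = x'
                · subst hw; rw [hz''x']
                  exact ⟨by linarith [(hzb w).1], by linarith⟩
                by_cases hw2 : w = x
                · subst hw2; rw [hz''x]
                  exact ⟨by linarith, by linarith [(hzb w).2]⟩
                · rw [hz''w w hw2 hw]; exact hzb w
              have hval : (∑ w, v w (z'' w))
                  = (∑ w, v w (z w)) - v x (z x) - v x' (z x')
                    + v x (z x - ε) + v x' (z x' + ε) := by
                rw [mt_sum_upd2 (fun w => v w (z w)) (fun w => v w (z'' w)) hxx'
                  (fun w hw hw' => by show v w (z'' w) = v w (z w); rw [hz''w w hw hw']),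
                  hz''x, hz''x']
              have hopt : (∑ w, v w (z'' w)) ≤ F y :=
                hle y ⟨hy0, hy1⟩ z'' hsz'' hbz''
              rw [hval, hzopt] at hopt
              have htransfer : v x' (z x' + ε) - v x' (z x') ≤ v x (z x) - v x (z x - ε) := by
                linarith
              have hstep1 : (v x' (z x' + ε) - v x' (z x')) / ε
                  ≤ (v x (z x) - v x (z x - ε)) / ε :=
                div_le_div_of_nonneg_right htransfer hε0.le
              have hstep2 : (v x (z x) - v x (z x - ε)) / ε ≤ s := by
                have hsec := mt_secant_anti (hconc x) hzmem
                  (x := t) (y := z x - ε) ⟨ht0, htp⟩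
                  ⟨by linarith, by linarith [(hzb x).2]⟩
                  (ne_of_lt hlt) (by intro hcon; linarith) (by linarith)
                have heq2 : (v x (z x - ε) - v x (z x)) / (z x - ε - z x)
                    = (v x (z x) - v x (z x - ε)) / ε := by
                  rw [show z x - ε - z x = -ε by ring, div_neg, ← neg_div, neg_sub]
                rw [heq2] at hsec
                exact hsec
              exact hstep1.trans hstep2
          · rw [if_neg hzx'] at hx'
            rw [hx']
            -- 0 ≤ s since v monotone and t < z x
            have hvle : v x t ≤ v x (z x) :=
              hmono x ⟨ht0, htp⟩ hzmem hlt.le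
            exact div_nonneg_of_nonpos (by linarith) (by linarith)
        have hMs : M ≤ s := by rw [hMdef.trans hxm]; exact hgen xm
        have heq : v x t - v x (z x) = s * (t - z x) := by
          rw [hs, div_mul_cancel₀]
          exact sub_ne_zero.2 (ne_of_lt hlt)
        rw [heq]
        exact mul_le_mul_of_nonpos_right hMs (by linarith)
      · rw [heq]; simp
      · -- z x < t
        have hzx : z x < p x := lt_of_lt_of_le hgt htp
        have hx := hdp x
        rw [if_pos hzx] at hx
        have hslope : (v x t - v x (z x)) / (t - z x) ≤ dp x := by
          refine ge_of_tendsto hx ?_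
          filter_upwards [Ioo_mem_nhdsGT
            (show (0:ℝ) < t - z x by linarith)] with ε hε
          obtain ⟨hε0, hεlt⟩ := hε
          have hsec := mt_secant_anti (hconc x) hzmem
            (x := z x + ε) (y := t)
            ⟨by linarith [(hzb x).1], by linarith⟩ ⟨ht0, htp⟩
            (by intro hcon; linarith) (ne_of_gt hgt) (by linarith)
          rw [add_sub_cancel_left] at hsec
          exact hsec
        have h2 := mul_le_mul_of_nonneg_right hslope (le_of_lt (sub_pos.2 hgt))
        rw [div_mul_cancel₀ _ (ne_of_gt (sub_pos.2 hgt))] at h2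
        exact h2.trans (mul_le_mul_of_nonneg_right (hdpM x) (by linarith))
    -- Step B : Fp ≤ M
    have hB : Fp ≤ M := by
      refine le_of_tendsto hFp ?_
      filter_upwards [Ioo_mem_nhdsGT h1y] with h hh
      obtain ⟨h0, hh1⟩ := hh
      have hub : F (y + h) ≤ F y + M * h := by
        rw [hF (y + h) ⟨by linarith, by linarith⟩]
        apply csSup_le
        · refine ⟨∑ x, v x ((y + h) * p x), fun x => (y + h) * p x, ⟨?_, ?_⟩, rfl⟩
          · rw [← Finset.mul_sum, hp1, mul_one]
          · intro x
            constructor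
            · exact mul_nonneg (by linarith) (hp0 x).le
            · exact mul_le_of_le_one_left (hp0 x).le (by linarith)
        · rintro r ⟨z', ⟨hs', hb'⟩, rfl⟩
          have hsum : (∑ x, v x (z' x)) ≤ ∑ x, (v x (z x) + M * (z' x - z x)) :=
            Finset.sum_le_sum fun x _ => by
              have := hkey x (z' x) (hb' x).1 (hb' x).2; linarith
          have hrhs : (∑ x, (v x (z x) + M * (z' x - z x))) = F y + M * h := by
            rw [Finset.sum_add_distrib, ← Finset.mul_sum, Finset.sum_sub_distrib,
              hs', hzsum, hzopt]
            ring
          linarith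
      rw [div_le_iff₀ h0]
      linarith
    refine le_antisymm hB ?_
    rw [hMdef.trans hxm]
    exact hA xm
end

section
/- In the mass transfer problem F(y) = max_{z∈Z(y)} Σ_x v(x, z(x)) with Z(y) = {z : Σ z(x) = y, 0 ≤ z(x) ≤ p(x)}, if z̃(y) is an optimal solution then the left derivative of F satisfies F'₋(y) = min over x ∈ X of d⁻ v(x, z̃(y,x)). -/
open Set Filter Topology

lemma sum_update_aux {X : Type*} [Fintype X] [DecidableEq X] (f : X → ℝ → ℝ) (z : X → ℝ)
    (x : X) (b : ℝ) :
    ∑ j, f j (Function.update z x b j) = (∑ j, f j (z j)) - f x (z x) + f x b := by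
  rw [← Finset.add_sum_erase Finset.univ (fun j => f j (Function.update z x b j))
        (Finset.mem_univ x),
      ← Finset.add_sum_erase Finset.univ (fun j => f j (z j)) (Finset.mem_univ x)]
  have h : ∀ j ∈ Finset.univ.erase x, f j (Function.update z x b j) = f j (z j) := fun j hj => by
    rw [Function.update_of_ne (Finset.ne_of_mem_erase hj)]
  rw [Finset.sum_congr rfl h, Function.update_self]
  ring

lemma sum_update_id {X : Type*} [Fintype X] [DecidableEq X] (z : X → ℝ) (x : X) (b : ℝ) :
    ∑ j, Function.update z x b j = (∑ j, z j) - z x + b :=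
  sum_update_aux (fun _ t => t) z x b

lemma concave_secant {s : Set ℝ} {f : ℝ → ℝ} (hf : ConcaveOn ℝ s f)
    {a b c d : ℝ} (ha : a ∈ s) (hb : b ∈ s) (hc : c ∈ s) (hd : d ∈ s)
    (hab : a < b) (hcd : c < d) (hac : a ≤ c) (hbd : b ≤ d) :
    (f d - f c) / (d - c) ≤ (f b - f a) / (b - a) := by
  have had : a < d := hac.trans_lt hcd
  have h1 : ((-f) b - (-f) a) / (b - a) ≤ ((-f) d - (-f) a) / (d - a) :=
    hf.neg.secant_mono ha hb hd hab.ne' had.ne' hbd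
  have h2 : ((-f) a - (-f) d) / (a - d) ≤ ((-f) c - (-f) d) / (c - d) :=
    hf.neg.secant_mono hd ha hc had.ne hcd.ne hac
  have e1 : ((-f) a - (-f) d) / (a - d) = ((-f) d - (-f) a) / (d - a) := by
    rw [← neg_div_neg_eq]; ring_nf
  have e2 : ((-f) c - (-f) d) / (c - d) = ((-f) d - (-f) c) / (d - c) := by
    rw [← neg_div_neg_eq]; ring_nf
  rw [e1] at h2
  rw [e2] at h2
  have h3 := h1.trans h2
  have l1 : ((-f) b - (-f) a) / (b - a) = -((f b - f a) / (b - a)) := by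
    simp only [Pi.neg_apply]
    rw [neg_sub_neg, ← neg_sub (f b) (f a), neg_div]
  have l2 : ((-f) d - (-f) c) / (d - c) = -((f d - f c) / (d - c)) := by
    simp only [Pi.neg_apply]
    rw [neg_sub_neg, ← neg_sub (f d) (f c), neg_div]
  rw [l1, l2] at h3
  linarith

/-- Mass transfer problem: if `z̃` is an optimal solution for level `y`, then
`F'₋(y) = min_x d⁻v(x, z̃(x))` (with conventions `d⁻v(x,0) = +∞`, `F'₋(0) = +∞`). -/
theorem masstransfer_left_derivative {X : Type*} [Fintype X] [Nonempty X]
    (p : X → ℝ) (hp0 : ∀ x, 0 < p x) (hp1 : (∑ x, p x) = 1)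
    (v : X → ℝ → ℝ)
    (hmono : ∀ x, MonotoneOn (v x) (Set.Icc 0 (p x)))
    (hcont : ∀ x, ContinuousOn (v x) (Set.Icc 0 (p x)))
    (hconc : ∀ x, ConcaveOn ℝ (Set.Icc 0 (p x)) (v x))
    (hv0 : ∀ x, v x 0 = 0)
    (F : ℝ → ℝ)
    (hF : ∀ y ∈ Set.Icc (0 : ℝ) 1, F y = sSup {r : ℝ | ∃ z : X → ℝ,
      ((∑ x, z x) = y ∧ ∀ x, 0 ≤ z x ∧ z x ≤ p x) ∧ r = ∑ x, v x (z x)})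
    (y : ℝ) (hy : y ∈ Set.Icc (0 : ℝ) 1)
    (z : X → ℝ) (hzfeas : (∑ x, z x) = y ∧ ∀ x, 0 ≤ z x ∧ z x ≤ p x)
    (hzopt : (∑ x, v x (z x)) = F y)
    (Fm : EReal) (dm : X → EReal)
    (hFm : if 0 < y then ∃ r : ℝ, Fm = (r : EReal) ∧
        Tendsto (fun h : ℝ => (F y - F (y - h)) / h) (nhdsWithin 0 (Set.Ioi 0)) (nhds r)
      else Fm = ⊤)
    (hdm : ∀ x, if 0 < z x then ∃ r : ℝ, dm x = (r : EReal) ∧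
        Tendsto (fun h : ℝ => (v x (z x) - v x (z x - h)) / h)
          (nhdsWithin 0 (Set.Ioi 0)) (nhds r)
      else dm x = ⊤) :
    Fm = Finset.univ.inf' Finset.univ_nonempty dm := by
  classical
  obtain ⟨hzsum, hzbox⟩ := hzfeas
  have hzmem : ∀ x, z x ∈ Icc 0 (p x) := fun x => ⟨(hzbox x).1, (hzbox x).2⟩
  -- trivial case y = 0
  rcases eq_or_lt_of_le hy.1 with hy0 | hypos
  · rw [if_neg (by rw [← hy0]; exact lt_irrefl 0)] at hFm
    have hz0 : ∀ x, z x = 0 := fun x =>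
      Finset.sum_eq_zero_iff_of_nonneg (fun j _ => (hzbox j).1) |>.1
        (by rw [hzsum, ← hy0]) x (Finset.mem_univ x)
    have hdt : ∀ x, dm x = ⊤ := fun x => by
      have := hdm x; rwa [if_neg (by rw [hz0 x]; exact lt_irrefl 0)] at this
    have heq : Finset.univ.inf' Finset.univ_nonempty dm = (⊤ : EReal) :=
      le_antisymm le_top (Finset.le_inf' _ _ fun x _ => (hdt x).ge)
    rw [heq, hFm]
  -- main case 0 < y
  rw [if_pos hypos] at hFm
  obtain ⟨r, hFmr, hrt⟩ := hFm
  have hdmS : ∀ x, 0 < z x → ∃ rx : ℝ, dm x = (rx : EReal) ∧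
      Tendsto (fun h : ℝ => (v x (z x) - v x (z x - h)) / h) (𝓝[>] 0) (𝓝 rx) :=
    fun x hx => by have := hdm x; rwa [if_pos hx] at this
  have hdmT : ∀ x, z x = 0 → dm x = ⊤ := fun x hx => by
    have := hdm x; rwa [if_neg (by rw [hx]; exact lt_irrefl 0)] at this
  set B : ℝ := ∑ x, v x (p x) with hB
  have hub : ∀ (y' : ℝ) (r' : ℝ), r' ∈ {r : ℝ | ∃ z' : X → ℝ,
      ((∑ x, z' x) = y' ∧ ∀ x, 0 ≤ z' x ∧ z' x ≤ p x) ∧ r = ∑ x, v x (z' x)} → r' ≤ B := by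
    rintro y' r' ⟨z', ⟨-, hbox'⟩, rfl⟩
    exact Finset.sum_le_sum fun x _ =>
      (hmono x) ⟨(hbox' x).1, (hbox' x).2⟩ ⟨(hp0 x).le, le_refl _⟩ (hbox' x).2
  have hFle : ∀ y' ∈ Icc (0:ℝ) 1, ∀ z' : X → ℝ,
      ((∑ x, z' x) = y' ∧ ∀ x, 0 ≤ z' x ∧ z' x ≤ p x) → (∑ x, v x (z' x)) ≤ F y' := by
    intro y' hy' z' hfeas'
    rw [hF y' hy']
    exact le_csSup ⟨B, fun r' hr' => hub y' r' hr'⟩ ⟨z', hfeas', rfl⟩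
  have hzley : ∀ x, z x ≤ y := by
    intro x
    rw [← hzsum]
    exact Finset.single_le_sum (fun j _ => (hzbox j).1) (Finset.mem_univ x)
  -- Step A : (r : EReal) ≤ dm x for all x
  have stepA : ∀ x, (r : EReal) ≤ dm x := by
    intro x
    rcases eq_or_lt_of_le (hzbox x).1 with hx0 | hxpos
    · rw [hdmT x hx0.symm]; exact le_top
    obtain ⟨rx, hdx, htx⟩ := hdmS x hxpos
    rw [hdx, EReal.coe_le_coe_iff]
    refine le_of_tendsto_of_tendsto hrt htx ?_
    filter_upwards [Ioo_mem_nhdsGT_of_mem (show (0:ℝ) ∈ Ico 0 (z x) from ⟨le_refl _, hxpos⟩)]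
      with h hh
    have hh0 : 0 < h := hh.1
    have hhz : h < z x := hh.2
    have hmem' : y - h ∈ Icc (0:ℝ) 1 :=
      ⟨by have := hzley x; linarith, by have := hy.2; linarith⟩
    have hs' : (∑ j, Function.update z x (z x - h) j) = y - h := by
      rw [sum_update_id, hzsum]; ring
    have hb' : ∀ j, 0 ≤ Function.update z x (z x - h) j ∧ Function.update z x (z x - h) j ≤ p j := by
      intro j
      rcases eq_or_ne j x with rfl | hj
      · rw [Function.update_self]
        exact ⟨by linarith, by have := (hzbox j).2; linarith⟩
      · rw [Function.update_of_ne hj]; exact hzbox j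
    have hFlow := hFle (y - h) hmem' _ ⟨hs', hb'⟩
    rw [sum_update_aux, hzopt] at hFlow
    rw [div_le_div_iff₀ hh0 hh0]
    nlinarith [hFlow]
  -- pick the minimizer xm of dm
  have hex : ∃ x, 0 < z x := by
    by_contra hno
    push_neg at hno
    have : (∑ x, z x) = 0 :=
      Finset.sum_eq_zero fun x _ => le_antisymm (hno x) (hzbox x).1
    rw [hzsum] at this
    exact absurd this (ne_of_gt hypos)
  obtain ⟨x₀, hx₀⟩ := hex
  obtain ⟨r₀, hd₀, ht₀⟩ := hdmS x₀ hx₀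
  obtain ⟨xm, -, hIm⟩ := Finset.exists_mem_eq_inf' (s := Finset.univ)
    Finset.univ_nonempty dm
  have hzm : 0 < z xm := by
    rcases eq_or_lt_of_le (hzbox xm).1 with h0 | h
    · exfalso
      have htop : dm xm = ⊤ := hdmT xm h0.symm
      have hle : Finset.univ.inf' Finset.univ_nonempty dm ≤ dm x₀ :=
        Finset.inf'_le dm (Finset.mem_univ x₀)
      rw [hIm, htop, hd₀] at hle
      exact (EReal.coe_lt_top r₀).not_ge hle
    · exact h
  obtain ⟨m, hdxm, htm⟩ := hdmS xm hzm
  -- key pointwise inequality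
  have key : ∀ x, ∀ w ∈ Icc (0:ℝ) (p x), v x w - v x (z x) ≤ m * (w - z x) := by
    intro x w hw
    rcases lt_trichotomy w (z x) with hlt | heq | hgt
    · have hxpos : 0 < z x := lt_of_le_of_lt hw.1 hlt
      obtain ⟨rx, hdx, htx⟩ := hdmS x hxpos
      have hmrx : m ≤ rx := by
        have h1 : (m : EReal) ≤ (rx : EReal) := by
          rw [← hdxm, ← hdx, ← hIm]; exact Finset.inf'_le dm (Finset.mem_univ x)
        exact EReal.coe_le_coe_iff.1 h1
      have hslope : rx ≤ (v x (z x) - v x w) / (z x - w) := by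
        refine le_of_tendsto htx ?_
        filter_upwards [Ioo_mem_nhdsGT_of_mem
          (show (0:ℝ) ∈ Ico 0 (z x - w) from ⟨le_refl _, by linarith⟩)] with h hh
        have h1 : z x - (z x - h) = h := by ring
        have h2 := concave_secant (hconc x) (a := w) (b := z x) (c := z x - h) (d := z x)
          hw (hzmem x) ⟨by linarith [hh.1, hh.2, hw.1], by linarith [(hzmem x).2, hh.1]⟩
          (hzmem x) hlt (by linarith [hh.1]) (by linarith [hh.2]) (le_refl _)
        rwa [h1] at h2
      have hdiv : m ≤ (v x (z x) - v x w) / (z x - w) := hmrx.trans hslope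
      rw [le_div_iff₀ (by linarith : (0:ℝ) < z x - w)] at hdiv
      have hr : m * (w - z x) = -(m * (z x - w)) := by ring
      linarith
    · rw [heq]; simp
    · have hxp : z x < p x := lt_of_lt_of_le hgt hw.2
      have hq : ∀ ε ∈ Ioo (0:ℝ) (min (w - z x) (z xm)),
          (v x (z x + ε) - v x (z x)) / ε ≤ (v xm (z xm) - v xm (z xm - ε)) / ε := by
        intro ε hε
        have hε0 : 0 < ε := hε.1
        have hε1 : ε < w - z x := (lt_min_iff.1 hε.2).1
        have hε2 : ε < z xm := (lt_min_iff.1 hε.2).2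
        rcases eq_or_ne x xm with rfl | hne
        · have h2 := concave_secant (hconc x) (a := z x - ε) (b := z x) (c := z x)
            (d := z x + ε)
            ⟨by linarith, by linarith [(hzmem x).2]⟩ (hzmem x) (hzmem x)
            ⟨by linarith [(hzmem x).1], by linarith [hw.2]⟩
            (by linarith) (by linarith) (by linarith) (by linarith)
          have e1 : z x + ε - z x = ε := by ring
          have e2 : z x - (z x - ε) = ε := by ring
          rwa [e1, e2] at h2
        · set Z1 := Function.update z x (z x + ε) with hZ1
          set Z2 := Function.update Z1 xm (z xm - ε) with hZ2
          have hZ1xm : Z1 xm = z xm := by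
            rw [hZ1, Function.update_of_ne (Ne.symm hne)]
          have hsum2 : (∑ j, Z2 j) = y := by
            rw [hZ2, sum_update_id, hZ1xm, hZ1, sum_update_id, hzsum]; ring
          have hbox2 : ∀ j, 0 ≤ Z2 j ∧ Z2 j ≤ p j := by
            intro j
            rcases eq_or_ne j xm with rfl | hjm
            · rw [hZ2, Function.update_self]
              exact ⟨by linarith, by linarith [(hzmem j).2]⟩
            · rw [hZ2, Function.update_of_ne hjm]
              rcases eq_or_ne j x with rfl | hjx
              · rw [hZ1, Function.update_self]
                exact ⟨by linarith [(hzmem j).1], by linarith [hw.2]⟩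
              · rw [hZ1, Function.update_of_ne hjx]; exact hzbox j
          have hle := hFle y hy Z2 ⟨hsum2, hbox2⟩
          rw [hZ2, sum_update_aux, hZ1xm, hZ1, sum_update_aux, ← hzopt] at hle
          rw [div_le_div_iff₀ hε0 hε0]
          nlinarith [hle]
      have hsl : (v x w - v x (z x)) / (w - z x) ≤ m := by
        refine ge_of_tendsto htm ?_
        filter_upwards [Ioo_mem_nhdsGT_of_mem
          (show (0:ℝ) ∈ Ico 0 (min (w - z x) (z xm)) from
            ⟨le_refl _, lt_min (by linarith) hzm⟩)] with ε hε
        refine le_trans ?_ (hq ε hε)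
        have hε0 : 0 < ε := hε.1
        have hε1 : ε < w - z x := (lt_min_iff.1 hε.2).1
        have h2 := concave_secant (hconc x) (a := z x) (b := z x + ε) (c := z x) (d := w)
          (hzmem x) ⟨by linarith [(hzmem x).1], by linarith [hw.2]⟩ (hzmem x) hw
          (by linarith) hgt (le_refl _) (by linarith)
        have e1 : z x + ε - z x = ε := by ring
        rwa [e1] at h2
      rw [div_le_iff₀ (by linarith : (0:ℝ) < w - z x)] at hsl
      linarith
  -- Step B : m ≤ r
  have stepB : m ≤ r := by
    refine ge_of_tendsto hrt ?_
    filter_upwards [Ioo_mem_nhdsGT_of_mem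
      (show (0:ℝ) ∈ Ico 0 y from ⟨le_refl _, hypos⟩)] with h hh
    have hh0 : 0 < h := hh.1
    have hhy : h < y := hh.2
    rw [le_div_iff₀ hh0]
    have hmem' : y - h ∈ Icc (0:ℝ) 1 := ⟨by linarith, by linarith [hy.2]⟩
    have hsup : F (y - h) ≤ F y - m * h := by
      rw [hF (y - h) hmem']
      apply csSup_le
      · refine ⟨∑ j, v j (z j * ((y - h) / y)), fun j => z j * ((y - h) / y), ⟨?_, ?_⟩, rfl⟩
        · rw [← Finset.sum_mul, hzsum]
          field_simp
        · intro j
          have ht0 : 0 ≤ (y - h) / y := div_nonneg (by linarith) hypos.le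
          have ht1 : (y - h) / y ≤ 1 := by rw [div_le_one hypos]; linarith
          refine ⟨mul_nonneg (hzbox j).1 ht0, ?_⟩
          calc z j * ((y - h) / y) ≤ z j * 1 :=
                mul_le_mul_of_nonneg_left ht1 (hzbox j).1
            _ = z j := mul_one _
            _ ≤ p j := (hzbox j).2
      · rintro r' ⟨z', ⟨hs', hb'⟩, rfl⟩
        have hsum_le : ∀ j ∈ Finset.univ, v j (z' j) ≤ v j (z j) + m * (z' j - z j) := by
          intro j _
          have := key j (z' j) ⟨(hb' j).1, (hb' j).2⟩
          linarith
        calc (∑ j, v j (z' j)) ≤ ∑ j, (v j (z j) + m * (z' j - z j)) :=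
              Finset.sum_le_sum hsum_le
          _ = (∑ j, v j (z j)) + m * ((∑ j, z' j) - ∑ j, z j) := by
              rw [Finset.sum_add_distrib, ← Finset.mul_sum, Finset.sum_sub_distrib]
          _ = F y - m * h := by rw [hs', hzsum, hzopt]; ring
    linarith
  -- conclude
  rw [hFmr]
  refine le_antisymm (Finset.le_inf' _ _ fun x _ => stepA x) ?_
  rw [hIm, hdxm]
  exact EReal.coe_le_coe_iff.2 stepB
end

section
/- In the mass transfer problem F(y) = max_{z∈Z(y)} Σ_x v(x, z(x)), if z̃(y) is an optimal solution for level y, then max over x ∈ X of d⁺ v(x, z̃(y,x)) ≤ min over x ∈ X of d⁻ v(x, z̃(y,x)); i.e., the superdifferential intervals [d⁺v(x,z̃(y,x)), d⁻v(x,z̃(y,x))] have a common point. -/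
open Set Filter

/-- Mass transfer problem: for an optimal solution `z̃` at level `y`,
`max_x d⁺v(x, z̃(x)) ≤ min_x d⁻v(x, z̃(x))` — i.e. the superdifferential intervals
`[d⁺v(x, z̃(x)), d⁻v(x, z̃(x))]` have a common point (conventions:
`d⁻v(x,0) = +∞`, `d⁺v(x, p(x)) = 0`). -/
theorem masstransfer_superdifferentials_intersect {X : Type*} [Fintype X] [Nonempty X]
    (p : X → ℝ) (hp0 : ∀ x, 0 < p x) (hp1 : (∑ x, p x) = 1)
    (v : X → ℝ → ℝ)
    (hmono : ∀ x, MonotoneOn (v x) (Set.Icc 0 (p x)))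
    (hcont : ∀ x, ContinuousOn (v x) (Set.Icc 0 (p x)))
    (hconc : ∀ x, ConcaveOn ℝ (Set.Icc 0 (p x)) (v x))
    (hv0 : ∀ x, v x 0 = 0)
    (F : ℝ → ℝ)
    (hF : ∀ y ∈ Set.Icc (0 : ℝ) 1, F y = sSup {r : ℝ | ∃ z : X → ℝ,
      ((∑ x, z x) = y ∧ ∀ x, 0 ≤ z x ∧ z x ≤ p x) ∧ r = ∑ x, v x (z x)})
    (y : ℝ) (hy : y ∈ Set.Icc (0 : ℝ) 1)
    (z : X → ℝ) (hzfeas : (∑ x, z x) = y ∧ ∀ x, 0 ≤ z x ∧ z x ≤ p x)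
    (hzopt : (∑ x, v x (z x)) = F y)
    (dp : X → ℝ) (dm : X → EReal)
    (hdp : ∀ x, if z x < p x then
        Tendsto (fun h : ℝ => (v x (z x + h) - v x (z x)) / h)
          (nhdsWithin 0 (Set.Ioi 0)) (nhds (dp x))
      else dp x = 0)
    (hdm : ∀ x, if 0 < z x then ∃ r : ℝ, dm x = (r : EReal) ∧
        Tendsto (fun h : ℝ => (v x (z x) - v x (z x - h)) / h)
          (nhdsWithin 0 (Set.Ioi 0)) (nhds r)
      else dm x = ⊤) :
    ((Finset.univ.sup' Finset.univ_nonempty dp : ℝ) : EReal) ≤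
      Finset.univ.inf' Finset.univ_nonempty dm := by
  classical
  obtain ⟨hsum, hbd⟩ := hzfeas
  refine Finset.le_inf' _ _ fun b _ => ?_
  rcases eq_or_lt_of_le (hbd b).1 with hzb | hzb
  · have hdmb := hdm b
    rw [if_neg (by rw [← hzb]; exact lt_irrefl 0)] at hdmb
    rw [hdmb]; exact le_top
  · have hdmb := hdm b
    rw [if_pos hzb] at hdmb
    obtain ⟨r, hr, htr⟩ := hdmb
    rw [hr, EReal.coe_le_coe_iff]
    refine Finset.sup'_le _ _ fun a _ => ?_
    rcases lt_or_eq_of_le (hbd a).2 with hza | hza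
    · -- z a < p a : use optimality (or concavity if a = b)
      have htp := hdp a; rw [if_pos hza] at htp
      set m := min (p a - z a) (z b) with hm
      have hm0 : 0 < m := lt_min (by linarith) hzb
      have key : ∀ h ∈ Set.Ioo (0:ℝ) m,
          v a (z a + h) + v b (z b - h) ≤ v a (z a) + v b (z b) := by
        rintro h ⟨hh0, hhm⟩
        have hh1 : h < p a - z a := lt_of_lt_of_le hhm (min_le_left _ _)
        have hh2 : h < z b := lt_of_lt_of_le hhm (min_le_right _ _)
        by_cases hab : a = b
        · subst hab
          have hmem1 : z a - h ∈ Set.Icc 0 (p a) := ⟨by linarith, by linarith [(hbd a).2]⟩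
          have hmem2 : z a + h ∈ Set.Icc 0 (p a) := ⟨by linarith [(hbd a).1], by linarith⟩
          have hc := (hconc a).2 hmem1 hmem2 (by norm_num : (0:ℝ) ≤ 1/2)
            (by norm_num : (0:ℝ) ≤ 1/2) (by norm_num)
          simp only [smul_eq_mul] at hc
          rw [show (1/2:ℝ) * (z a - h) + 1/2 * (z a + h) = z a by ring] at hc
          linarith
        · set z' : X → ℝ := Function.update (Function.update z a (z a + h)) b (z b - h)
            with hz'
          have hz'a : z' a = z a + h := by
            rw [hz', Function.update_of_ne hab, Function.update_self]
          have hz'b : z' b = z b - h := by rw [hz', Function.update_self]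
          have hz'x : ∀ x, x ≠ a → x ≠ b → z' x = z x := fun x hxa hxb => by
            rw [hz', Function.update_of_ne hxb, Function.update_of_ne hxa]
          have hdiff : ∀ f : X → ℝ → ℝ,
              ∑ x, (f x (z' x) - f x (z x))
                = (f a (z' a) - f a (z a)) + (f b (z' b) - f b (z b)) := by
            intro f
            rw [← Finset.sum_subset (Finset.subset_univ ({a, b} : Finset X))
              (fun x _ hx => ?_), Finset.sum_pair hab]
            simp only [Finset.mem_insert, Finset.mem_singleton, not_or] at hx
            rw [hz'x x hx.1 hx.2, sub_self]
          have hsum' : (∑ x, z' x) = y := by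
            have h1 := hdiff (fun _ t => t)
            simp only [hz'a, hz'b] at h1
            rw [Finset.sum_sub_distrib] at h1
            have : (z a + h - z a) + (z b - h - z b) = 0 := by ring
            rw [this] at h1
            linarith [hsum]
          have hbdz' : ∀ x, 0 ≤ z' x ∧ z' x ≤ p x := by
            intro x
            by_cases hxb : x = b
            · subst hxb
              rw [hz'b]
              exact ⟨by linarith, by linarith [(hbd x).2]⟩
            by_cases hxa : x = a
            · subst hxa
              rw [hz'a]
              exact ⟨by linarith [(hbd x).1], by linarith⟩
            · rw [hz'x x hxa hxb]; exact hbd x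
          have hbdd : BddAbove {r : ℝ | ∃ w : X → ℝ,
              ((∑ x, w x) = y ∧ ∀ x, 0 ≤ w x ∧ w x ≤ p x) ∧ r = ∑ x, v x (w x)} := by
            refine ⟨∑ x, v x (p x), ?_⟩
            rintro s ⟨w, ⟨-, hw⟩, rfl⟩
            exact Finset.sum_le_sum fun x _ =>
              hmono x ⟨(hw x).1, (hw x).2⟩ ⟨le_of_lt (hp0 x), le_refl _⟩ (hw x).2
          have hle : (∑ x, v x (z' x)) ≤ F y := by
            rw [hF y hy]
            exact le_csSup hbdd ⟨z', ⟨hsum', hbdz'⟩, rfl⟩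
          have h2 := hdiff v
          rw [Finset.sum_sub_distrib, hz'a, hz'b] at h2
          linarith [hle, hzopt, h2]
      have hev : ∀ᶠ h in nhdsWithin (0:ℝ) (Set.Ioi 0),
          (v a (z a + h) - v a (z a)) / h ≤ (v b (z b) - v b (z b - h)) / h := by
        filter_upwards [Ioo_mem_nhdsGT_of_mem (Set.left_mem_Ico.2 hm0)] with h hh
        exact (div_le_div_iff_of_pos_right hh.1).2 (by linarith [key h hh])
      exact le_of_tendsto_of_tendsto htp htr hev
    · -- z a = p a : dp a = 0, and r ≥ 0
      have hdpa := hdp a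
      rw [if_neg (by rw [hza]; exact lt_irrefl _)] at hdpa
      rw [hdpa]
      refine ge_of_tendsto htr ?_
      filter_upwards [Ioo_mem_nhdsGT_of_mem (Set.left_mem_Ico.2 hzb)] with h hh
      have hv' : v b (z b - h) ≤ v b (z b) :=
        hmono b ⟨by linarith [hh.2], by linarith [(hbd b).2, hh.1]⟩
          ⟨(hbd b).1, (hbd b).2⟩ (by linarith [hh.1])
      exact div_nonneg (by linarith) (le_of_lt hh.1)
end

section
/- Let f : [a,b] → ℝ be a nondecreasing continuous concave function on a finite interval, with conventions f'₋(a) = +∞ and f'₊(b) = 0. Then for every real number u ≥ 0, exactly one of the following holds: (i) there is a unique y* ∈ [a,b] with u ∈ [f'₊(y*), f'₋(y*)], or (ii) there is a nonempty open interval on which f is differentiable with derivative identically equal to u. -/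
/-!
With `g x = f x - u * x`, the number `u` lies in `[f'₊(y), f'₋(y)]` exactly when every secant
slope of `f` to the right of `y` is at most `u` and every one to the left is at least `u`
(concavity gives one direction, passing to the limit the other, and the endpoint conventions make
the missing side vacuous), i.e. exactly when `y` maximises `g` on `[a,b]`. The maximisers of the
continuous concave `g` form a nonempty interval. If it is a point we are in case (i); otherwise `g`
is constant on it, so `f' = u` on its interior, which is case (ii), and (ii) in turn produces
infinitely many maximisers.
-/

open Set Filter
open scoped Topology

lemma Set.Nonempty.xor_existsUnique_mem_nontrivial {α : Type*} {s : Set α} (hs : s.Nonempty) :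
    Xor (∃! x, x ∈ s) s.Nontrivial := by
  rw [xor_iff_iff_not, Set.not_nontrivial_iff]
  obtain ⟨x, hx⟩ := hs
  exact ⟨fun ⟨y, _, hy⟩ z hz w hw => (hy z hz).trans (hy w hw).symm,
    fun h => ⟨x, hx, fun y hy => h hy hx⟩⟩

section

variable {f : ℝ → ℝ} {y r u : ℝ}

theorem hasDerivWithinAt_Ioi_iff_tendsto_div :
    HasDerivWithinAt f r (Ioi y) y ↔
      Tendsto (fun h => (f (y + h) - f y) / h) (𝓝[>] 0) (𝓝 r) := by
  rw [hasDerivWithinAt_iff_tendsto_slope' self_notMem_Ioi, ← add_zero y,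
    ← Filter.map_add_left_nhdsGT, tendsto_map'_iff, add_zero]
  refine tendsto_congr fun h => ?_
  simp [slope_def_field]

theorem hasDerivWithinAt_Iio_iff_tendsto_div :
    HasDerivWithinAt f r (Iio y) y ↔
      Tendsto (fun h => (f y - f (y - h)) / h) (𝓝[>] 0) (𝓝 r) := by
  rw [hasDerivWithinAt_iff_tendsto_slope' self_notMem_Iio, ← sub_zero y,
    ← Filter.map_subLeft_nhdsGT, tendsto_map'_iff, sub_zero]
  refine tendsto_congr fun h => ?_
  simp only [Function.comp_apply, slope_def_field]
  rw [← neg_div_neg_eq]; ring_nf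

theorem isMaxOn_sub_mul_iff {S : Set ℝ} :
    IsMaxOn (fun x => f x - u * x) S y ↔
      (∀ t ∈ S, y < t → slope f y t ≤ u) ∧ (∀ t ∈ S, t < y → u ≤ slope f t y) := by
  simp only [IsMaxOn, IsMaxFilter, eventually_principal, slope_def_field]
  constructor
  · intro h
    refine ⟨fun t ht hyt => ?_, fun t ht hty => ?_⟩
    · rw [div_le_iff₀ (sub_pos.2 hyt)]; linarith [h t ht]
    · rw [le_div_iff₀ (sub_pos.2 hty)]; linarith [h t ht]
  · rintro ⟨hright, hleft⟩ t ht
    rcases lt_trichotomy t y with hty | rfl | hyt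
    · have := hleft t ht hty
      rw [le_div_iff₀ (sub_pos.2 hty)] at this; linarith
    · exact le_rfl
    · have := hright t ht hyt
      rw [div_le_iff₀ (sub_pos.2 hyt)] at this; linarith

theorem ConcaveOn.le_iff_forall_slope_le_of_hasDerivWithinAt_Ioi {S : Set ℝ}
    (hf : ConcaveOn ℝ S f) (hy : y ∈ S) (hne : ∃ t ∈ S, y < t)
    (hr : HasDerivWithinAt f r (Ioi y) y) :
    r ≤ u ↔ ∀ t ∈ S, y < t → slope f y t ≤ u := by
  refine ⟨fun hru t ht hyt => (hf.slope_le_of_hasDerivWithinAt_Ioi hy ht hyt hr).trans hru,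
    fun hslope => le_of_tendsto ((hasDerivWithinAt_iff_tendsto_slope' self_notMem_Ioi).1 hr) ?_⟩
  obtain ⟨t₀, ht₀, hyt₀⟩ := hne
  filter_upwards [Ioo_mem_nhdsGT hyt₀] with t ht
  exact hslope t (hf.1.ordConnected.out hy ht₀ (Ioo_subset_Icc_self ht)) ht.1

theorem ConcaveOn.le_iff_forall_le_slope_of_hasDerivWithinAt_Iio {S : Set ℝ}
    (hf : ConcaveOn ℝ S f) (hy : y ∈ S) (hne : ∃ t ∈ S, t < y)
    (hr : HasDerivWithinAt f r (Iio y) y) :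
    u ≤ r ↔ ∀ t ∈ S, t < y → u ≤ slope f t y := by
  refine ⟨fun hur t ht hty => hur.trans (hf.le_slope_of_hasDerivWithinAt_Iio ht hy hty hr),
    fun hslope => ge_of_tendsto ((hasDerivWithinAt_iff_tendsto_slope' self_notMem_Iio).1 hr) ?_⟩
  obtain ⟨t₀, ht₀, ht₀y⟩ := hne
  filter_upwards [Ioo_mem_nhdsLT ht₀y] with t ht
  rw [slope_comm]
  exact hslope t (hf.1.ordConnected.out ht₀ hy (Ioo_subset_Icc_self ht)) ht.2

theorem ConcaveOn.eq_of_isMaxOn_of_mem_Icc {𝕜 β : Type*} [Field 𝕜] [LinearOrder 𝕜]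
    [IsStrictOrderedRing 𝕜] [AddCommGroup β] [LinearOrder β] [IsOrderedAddMonoid β]
    [Module 𝕜 β] [IsStrictOrderedModule 𝕜 β] {S : Set 𝕜} {g : 𝕜 → β} {y₁ y₂ z : 𝕜}
    (hg : ConcaveOn 𝕜 S g) (hy₁ : y₁ ∈ S) (hy₂ : y₂ ∈ S) (h₁ : IsMaxOn g S y₁)
    (h₂ : IsMaxOn g S y₂) (hz : z ∈ Icc y₁ y₂) : g z = g y₁ :=
  le_antisymm (h₁ (hg.1.ordConnected.out hy₁ hy₂ hz))
    ((le_min le_rfl (h₂ hy₁)).trans (hg.min_le_of_mem_Icc hy₁ hy₂ hz))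

theorem hasDerivAt_of_forall_sub_mul_eq {y₁ y₂ c : ℝ} (h : ∀ x ∈ Ioo y₁ y₂, f x - u * x = c)
    (hy : y ∈ Ioo y₁ y₂) : HasDerivAt f u y := by
  have haff : HasDerivAt (fun x => c + u * x) u y := by
    simpa using ((hasDerivAt_id y).const_mul u).const_add c
  refine haff.congr_of_eventuallyEq ?_
  filter_upwards [Ioo_mem_nhds hy.1 hy.2] with x hx
  linarith [h x hx]

section OneSidedDerivatives

variable {a b : ℝ} {fp fm : ℝ → EReal}

theorem fp_le_iff_forall_slope_le (hf : ConcaveOn ℝ (Icc a b) f)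
    (hfp : ∀ y ∈ Ico a b, ∃ r : ℝ, fp y = r ∧ HasDerivWithinAt f r (Ioi y) y)
    (hfpb : fp b = 0) (hu : 0 ≤ u) (hy : y ∈ Icc a b) :
    fp y ≤ u ↔ ∀ t ∈ Icc a b, y < t → slope f y t ≤ u := by
  rcases hy.2.eq_or_lt with rfl | hyb
  · exact iff_of_true (hfpb ▸ EReal.coe_nonneg.2 hu) fun t ht hyt => absurd ht.2 hyt.not_ge
  · obtain ⟨r, hr, hderiv⟩ := hfp y ⟨hy.1, hyb⟩
    rw [hr, EReal.coe_le_coe_iff]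
    exact hf.le_iff_forall_slope_le_of_hasDerivWithinAt_Ioi hy
      ⟨b, right_mem_Icc.2 (hy.1.trans hyb.le), hyb⟩ hderiv

theorem le_fm_iff_forall_le_slope (hf : ConcaveOn ℝ (Icc a b) f)
    (hfm : ∀ y ∈ Ioc a b, ∃ r : ℝ, fm y = r ∧ HasDerivWithinAt f r (Iio y) y)
    (hfma : fm a = ⊤) (hy : y ∈ Icc a b) :
    u ≤ fm y ↔ ∀ t ∈ Icc a b, t < y → u ≤ slope f t y := by
  rcases hy.1.eq_or_lt with rfl | hay
  · exact iff_of_true (hfma ▸ le_top) fun t ht hty => absurd ht.1 hty.not_ge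
  · obtain ⟨r, hr, hderiv⟩ := hfm y ⟨hay, hy.2⟩
    rw [hr, EReal.coe_le_coe_iff]
    exact hf.le_iff_forall_le_slope_of_hasDerivWithinAt_Iio hy
      ⟨a, left_mem_Icc.2 (hay.le.trans hy.2), hay⟩ hderiv

theorem fp_eq_of_hasDerivAt
    (hfp : ∀ y ∈ Ico a b, ∃ r : ℝ, fp y = r ∧ HasDerivWithinAt f r (Ioi y) y)
    (hy : y ∈ Ico a b) (h : HasDerivAt f u y) : fp y = u := by
  obtain ⟨r, hr, hderiv⟩ := hfp y hy
  rw [hr, (uniqueDiffWithinAt_Ioi y).eq_deriv _ hderiv h.hasDerivWithinAt]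

theorem fm_eq_of_hasDerivAt
    (hfm : ∀ y ∈ Ioc a b, ∃ r : ℝ, fm y = r ∧ HasDerivWithinAt f r (Iio y) y)
    (hy : y ∈ Ioc a b) (h : HasDerivAt f u y) : fm y = u := by
  obtain ⟨r, hr, hderiv⟩ := hfm y hy
  rw [hr, (uniqueDiffWithinAt_Iio y).eq_deriv _ hderiv h.hasDerivWithinAt]

theorem fp_le_and_le_fm_iff_isMaxOn (hf : ConcaveOn ℝ (Icc a b) f)
    (hfp : ∀ y ∈ Ico a b, ∃ r : ℝ, fp y = r ∧ HasDerivWithinAt f r (Ioi y) y)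
    (hfpb : fp b = 0) (hfm : ∀ y ∈ Ioc a b, ∃ r : ℝ, fm y = r ∧ HasDerivWithinAt f r (Iio y) y)
    (hfma : fm a = ⊤) (hu : 0 ≤ u) (hy : y ∈ Icc a b) :
    fp y ≤ u ∧ u ≤ fm y ↔ IsMaxOn (fun x => f x - u * x) (Icc a b) y := by
  rw [fp_le_iff_forall_slope_le hf hfp hfpb hu hy, le_fm_iff_forall_le_slope hf hfm hfma hy,
    isMaxOn_sub_mul_iff]

theorem fp_eq_and_fm_eq_of_isMaxOn {y₁ y₂ : ℝ} (hf : ConcaveOn ℝ (Icc a b) f)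
    (hfp : ∀ y ∈ Ico a b, ∃ r : ℝ, fp y = r ∧ HasDerivWithinAt f r (Ioi y) y)
    (hfm : ∀ y ∈ Ioc a b, ∃ r : ℝ, fm y = r ∧ HasDerivWithinAt f r (Iio y) y)
    (hy₁ : y₁ ∈ Icc a b) (hy₂ : y₂ ∈ Icc a b)
    (h₁ : IsMaxOn (fun x => f x - u * x) (Icc a b) y₁)
    (h₂ : IsMaxOn (fun x => f x - u * x) (Icc a b) y₂) (hy : y ∈ Ioo y₁ y₂) :
    fp y = u ∧ fm y = u := by
  have hg : ConcaveOn ℝ (Icc a b) (fun x => f x - u * x) :=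
    hf.sub ((LinearMap.mul ℝ ℝ u).convexOn (convex_Icc a b))
  have hderiv : HasDerivAt f u y := hasDerivAt_of_forall_sub_mul_eq
    (fun x hx => hg.eq_of_isMaxOn_of_mem_Icc hy₁ hy₂ h₁ h₂ (Ioo_subset_Icc_self hx)) hy
  exact ⟨fp_eq_of_hasDerivAt hfp ⟨hy₁.1.trans hy.1.le, hy.2.trans_le hy₂.2⟩ hderiv,
    fm_eq_of_hasDerivAt hfm ⟨hy₁.1.trans_lt hy.1, hy.2.le.trans hy₂.2⟩ hderiv⟩

end OneSidedDerivatives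

end

theorem superdifferential_dichotomy_general {a b : ℝ} (hab : a < b) (f : ℝ → ℝ)
    (hcont : ContinuousOn f (Set.Icc a b))
    (hconc : ConcaveOn ℝ (Set.Icc a b) f)
    (fp fm : ℝ → EReal)
    (hfp : ∀ y ∈ Set.Ico a b, ∃ r : ℝ, fp y = (r : EReal) ∧
      Tendsto (fun h : ℝ => (f (y + h) - f y) / h) (nhdsWithin 0 (Set.Ioi 0)) (nhds r))
    (hfpb : fp b = (0 : EReal))
    (hfm : ∀ y ∈ Set.Ioc a b, ∃ r : ℝ, fm y = (r : EReal) ∧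
      Tendsto (fun h : ℝ => (f y - f (y - h)) / h) (nhdsWithin 0 (Set.Ioi 0)) (nhds r))
    (hfma : fm a = ⊤)
    (u : ℝ) (hu : 0 ≤ u) :
    Xor' (∃! y : ℝ, y ∈ Set.Icc a b ∧ fp y ≤ (u : EReal) ∧ (u : EReal) ≤ fm y)
      (∃ c d : ℝ, c < d ∧ Set.Ioo c d ⊆ Set.Icc a b ∧
        ∀ y ∈ Set.Ioo c d, fp y = (u : EReal) ∧ fm y = (u : EReal)) := by
  have hfp' : ∀ y ∈ Ico a b, ∃ r : ℝ, fp y = r ∧ HasDerivWithinAt f r (Ioi y) y :=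
    fun y hy => (hfp y hy).imp fun _ => And.imp_right hasDerivWithinAt_Ioi_iff_tendsto_div.2
  have hfm' : ∀ y ∈ Ioc a b, ∃ r : ℝ, fm y = r ∧ HasDerivWithinAt f r (Iio y) y :=
    fun y hy => (hfm y hy).imp fun _ => And.imp_right hasDerivWithinAt_Iio_iff_tendsto_div.2
  have hmax_iff := fun y (hy : y ∈ Icc a b) =>
    fp_le_and_le_fm_iff_isMaxOn hconc hfp' hfpb hfm' hfma hu hy
  set M := {y | y ∈ Icc a b ∧ fp y ≤ u ∧ u ≤ fm y}
  have hM : M.Nonempty := by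
    obtain ⟨y, hy, hmax⟩ := isCompact_Icc.exists_isMaxOn (nonempty_Icc.2 hab.le)
      (hcont.sub (continuous_const.mul continuous_id).continuousOn)
    exact ⟨y, hy, (hmax_iff y hy).2 hmax⟩
  suffices (∃ c d : ℝ, c < d ∧ Ioo c d ⊆ Icc a b ∧ ∀ y ∈ Ioo c d, fp y = u ∧ fm y = u) ↔
      M.Nontrivial by
    rw [this]; exact hM.xor_existsUnique_mem_nontrivial
  constructor
  · rintro ⟨c, d, hcd, hsub, hderiv⟩
    exact (Ioo_infinite hcd).nontrivial.mono fun y hy =>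
      ⟨hsub hy, (hderiv y hy).1.le, (hderiv y hy).2.ge⟩
  · intro hMnt
    obtain ⟨y₁, ⟨hy₁, hsd₁⟩, y₂, ⟨hy₂, hsd₂⟩, hlt⟩ := hMnt.exists_lt
    exact ⟨y₁, y₂, hlt, Ioo_subset_Icc_self.trans (Icc_subset_Icc hy₁.1 hy₂.2),
      fun y => fp_eq_and_fm_eq_of_isMaxOn hconc hfp' hfm' hy₁ hy₂
        ((hmax_iff y₁ hy₁).1 hsd₁) ((hmax_iff y₂ hy₂).1 hsd₂)⟩

/-- For a nondecreasing continuous concave `f : [a,b] → ℝ`, with the conventions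
`f'₋(a) = +∞` and `f'₊(b) = 0`, for every `u ≥ 0` exactly one of the following holds:
(i) there is a unique `y* ∈ [a,b]` with `u ∈ [f'₊(y*), f'₋(y*)]`, or
(ii) there is a nonempty open interval on which `f` is differentiable with derivative
identically `u`. -/
theorem superdifferential_dichotomy {a b : ℝ} (hab : a < b) (f : ℝ → ℝ)
    (hmono : MonotoneOn f (Set.Icc a b)) (hcont : ContinuousOn f (Set.Icc a b))
    (hconc : ConcaveOn ℝ (Set.Icc a b) f)
    (fp fm : ℝ → EReal)
    (hfp : ∀ y ∈ Set.Ico a b, ∃ r : ℝ, fp y = (r : EReal) ∧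
      Tendsto (fun h : ℝ => (f (y + h) - f y) / h) (nhdsWithin 0 (Set.Ioi 0)) (nhds r))
    (hfpb : fp b = (0 : EReal))
    (hfm : ∀ y ∈ Set.Ioc a b, ∃ r : ℝ, fm y = (r : EReal) ∧
      Tendsto (fun h : ℝ => (f y - f (y - h)) / h) (nhdsWithin 0 (Set.Ioi 0)) (nhds r))
    (hfma : fm a = ⊤)
    (u : ℝ) (hu : 0 ≤ u) :
    Xor' (∃! y : ℝ, y ∈ Set.Icc a b ∧ fp y ≤ (u : EReal) ∧ (u : EReal) ≤ fm y)
      (∃ c d : ℝ, c < d ∧ Set.Ioo c d ⊆ Set.Icc a b ∧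
        ∀ y ∈ Set.Ioo c d, fp y = (u : EReal) ∧ fm y = (u : EReal)) :=
  superdifferential_dichotomy_general hab f hcont hconc fp fm hfp hfpb hfm hfma u hu
end
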